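/- arXiv:2104.04471 — 14 statements merged into one kernel-verified Lean document; each statement's English description precedes it below -/
import Mathlib

section
/- A bipartite graph G with fixed bipartition (A, B) contains no induced copy of the unbalanced 2P_3 (two disjoint paths on 3 vertices, each with its middle vertex in the same part) if and only if the vertices in each part admit a good ordering, i.e., a linear ordering (a_1,...,a_l) such that for all i < j, the neighbourhood of a_j contains at most one vertex not in the neighbourhood of a_i. -/
/-- A bipartite graph with parts `A`, `B` is given by its adjacency relation `adj : A → B → Prop`.
The part `A` admits a *good ordering* if its vertices can be listed so that, for `i < j`,
the neighbourhood of the `j`-th vertex contains at most one vertex not in the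
neighbourhood of the `i`-th vertex. -/
def GoodOrdering {A B : Type*} [Fintype A] (adj : A → B → Prop) : Prop :=
  ∃ σ : Fin (Fintype.card A) ≃ A,
    ∀ i j : Fin (Fintype.card A), i < j →
      ({b | adj (σ j) b} \ {b | adj (σ i) b}).ncard ≤ 1

/-- An induced unbalanced `2P₃` whose two middle vertices lie in part `A`:
six distinct vertices `a, a' ∈ A`, `b₁, b₂, b₁', b₂' ∈ B` inducing two disjoint paths
`b₁ - a - b₂` and `b₁' - a' - b₂'`. -/
def HasUnbal2P3Centers {A B : Type*} (adj : A → B → Prop) : Prop :=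
  ∃ (a a' : A) (b₁ b₂ b₁' b₂' : B),
    a ≠ a' ∧ b₁ ≠ b₂ ∧ b₁ ≠ b₁' ∧ b₁ ≠ b₂' ∧ b₂ ≠ b₁' ∧ b₂ ≠ b₂' ∧ b₁' ≠ b₂' ∧
    adj a b₁ ∧ adj a b₂ ∧ adj a' b₁' ∧ adj a' b₂' ∧
    ¬ adj a b₁' ∧ ¬ adj a b₂' ∧ ¬ adj a' b₁ ∧ ¬ adj a' b₂

/-- From two vertices whose neighbourhood differences both have at least two elements,
we can build an induced unbalanced `2P₃`. -/
lemma hasUnbal_of_two_two {A B : Type*} [Fintype B] (adj : A → B → Prop)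
    {a a' : A} (hne : a ≠ a')
    (h1 : 1 < ({b | adj a b} \ {b | adj a' b}).ncard)
    (h2 : 1 < ({b | adj a' b} \ {b | adj a b}).ncard) :
    HasUnbal2P3Centers adj := by
  rw [Set.one_lt_ncard_iff (Set.toFinite _)] at h1 h2
  obtain ⟨b₁, b₂, hb₁, hb₂, h12⟩ := h1
  obtain ⟨b₁', b₂', hb₁', hb₂', h12'⟩ := h2
  simp only [Set.mem_diff, Set.mem_setOf_eq] at hb₁ hb₂ hb₁' hb₂'
  refine ⟨a, a', b₁, b₂, b₁', b₂', hne, h12, ?_, ?_, ?_, ?_, h12',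
    hb₁.1, hb₂.1, hb₁'.1, hb₂'.1, hb₁'.2, hb₂'.2, hb₁.2, hb₂.2⟩
  · rintro rfl; exact hb₁'.2 hb₁.1
  · rintro rfl; exact hb₂'.2 hb₁.1
  · rintro rfl; exact hb₁'.2 hb₂.1
  · rintro rfl; exact hb₂'.2 hb₂.1

/-- Key lemma: no unbalanced `2P₃` gives the good-ordering bound for vertices
ordered by non-increasing degree. -/
lemma key_bound {A B : Type*} [Fintype B] (adj : A → B → Prop)
    (h : ¬ HasUnbal2P3Centers adj) {a a' : A} (hne : a ≠ a')
    (hdeg : ({b | adj a' b} : Set B).ncard ≤ ({b | adj a b} : Set B).ncard) :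
    ({b | adj a' b} \ {b | adj a b}).ncard ≤ 1 := by
  by_contra hcon
  push_neg at hcon
  have h1 : 1 < ({b | adj a b} \ {b | adj a' b}).ncard := by
    have := (Set.ncard_le_ncard_iff_ncard_diff_le_ncard_diff
      (Set.toFinite _) (Set.toFinite _)).mp hdeg
    omega
  exact h (hasUnbal_of_two_two adj hne h1 hcon)

/-- No unbalanced `2P₃` implies a good ordering exists (sort by decreasing degree). -/
lemma goodOrdering_of_not_hasUnbal {A B : Type*} [Fintype A] [Fintype B]
    (adj : A → B → Prop) (h : ¬ HasUnbal2P3Centers adj) : GoodOrdering adj := by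
  classical
  set e : Fin (Fintype.card A) ≃ A := (Fintype.equivFin A).symm with he
  set f : Fin (Fintype.card A) → ℤ := fun i => -(({b | adj (e i) b} : Set B).ncard : ℤ) with hf
  refine ⟨(Tuple.sort f).trans e, fun i j hij => ?_⟩
  have hmono := Tuple.monotone_sort f hij.le
  simp only [Function.comp_apply, hf, neg_le_neg_iff, Nat.cast_le] at hmono
  rw [← hf] at hmono
  have hne : e (Tuple.sort f i) ≠ e (Tuple.sort f j) := by
    intro hEq
    exact absurd ((Tuple.sort f).injective (e.injective hEq)) hij.ne
  simpa only [Equiv.trans_apply] using key_bound adj h hne hmono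

/-- A good ordering forbids the unbalanced `2P₃`. -/
lemma not_hasUnbal_of_goodOrdering {A B : Type*} [Fintype A] [Fintype B]
    (adj : A → B → Prop) (h : GoodOrdering adj) : ¬ HasUnbal2P3Centers adj := by
  obtain ⟨σ, hσ⟩ := h
  rintro ⟨a, a', b₁, b₂, b₁', b₂', hne, h12, -, -, -, -, h12', hab₁, hab₂, hab₁', hab₂',
    hna₁, hna₂, hna₁', hna₂'⟩
  set i := σ.symm a with hi
  set j := σ.symm a' with hj
  have hij : i ≠ j := fun hEq => hne (by
    have := congrArg σ hEq
    simpa [hi, hj] using this)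
  have big1 : 1 < ({b | adj a b} \ {b | adj a' b}).ncard := by
    rw [Set.one_lt_ncard_iff (Set.toFinite _)]
    exact ⟨b₁, b₂, ⟨hab₁, hna₁'⟩, ⟨hab₂, hna₂'⟩, h12⟩
  have big2 : 1 < ({b | adj a' b} \ {b | adj a b}).ncard := by
    rw [Set.one_lt_ncard_iff (Set.toFinite _)]
    exact ⟨b₁', b₂', ⟨hab₁', hna₁⟩, ⟨hab₂', hna₂⟩, h12'⟩
  rcases lt_or_gt_of_ne hij with hlt | hlt
  · have := hσ i j hlt
    rw [hi, hj] at this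
    simp only [Equiv.apply_symm_apply] at this
    omega
  · have := hσ j i hlt
    rw [hi, hj] at this
    simp only [Equiv.apply_symm_apply] at this
    omega

/-- a bipartite graph contains no induced unbalanced `2P₃`
(with both centres in `A`, or both centres in `B`) if and only if
both parts admit good orderings. -/
theorem quasiChain_iff_goodOrderings {A B : Type*} [Fintype A] [Fintype B]
    (adj : A → B → Prop) :
    (¬ HasUnbal2P3Centers adj ∧ ¬ HasUnbal2P3Centers (fun b a => adj a b)) ↔
      (GoodOrdering adj ∧ GoodOrdering (fun b a => adj a b)) := by
  constructor
  · rintro ⟨h1, h2⟩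
    exact ⟨goodOrdering_of_not_hasUnbal adj h1,
      goodOrdering_of_not_hasUnbal (fun b a => adj a b) h2⟩
  · rintro ⟨h1, h2⟩
    exact ⟨not_hasUnbal_of_goodOrdering adj h1,
      not_hasUnbal_of_goodOrdering (fun b a => adj a b) h2⟩
end

section
/- Ordering the vertices of each part of a bipartite graph that contains no unbalanced induced 2P_3 in non-increasing order of their degrees yields a good ordering of each part. -/
lemma key_unbal {A B : Type*} [Fintype B] (adj : A → B → Prop) (a a' : A) (ha : a ≠ a')
    (hd : {b | adj a' b}.ncard ≤ {b | adj a b}.ncard)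
    (h2 : 2 ≤ ({b | adj a' b} \ {b | adj a b}).ncard) : HasUnbal2P3Centers adj := by
  classical
  have hS : ({b | adj a b}).Finite := Set.toFinite _
  have hT : ({b | adj a' b}).Finite := Set.toFinite _
  have hdiff : 2 ≤ ({b | adj a b} \ {b | adj a' b}).ncard := by
    have := (Set.ncard_le_ncard_iff_ncard_diff_le_ncard_diff hT hS).mp hd
    omega
  obtain ⟨b₁, hb₁, b₂, hb₂, h12⟩ :=
    (Set.one_lt_ncard (hS.diff (t := {b | adj a' b}))).mp hdiff
  obtain ⟨b₁', hb₁', b₂', hb₂', h12'⟩ :=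
    (Set.one_lt_ncard (hT.diff (t := {b | adj a b}))).mp h2
  refine ⟨a, a', b₁, b₂, b₁', b₂', ha, h12, ?_, ?_, ?_, ?_, h12', hb₁.1, hb₂.1,
    hb₁'.1, hb₂'.1, hb₁'.2, hb₂'.2, hb₁.2, hb₂.2⟩
  · rintro rfl; exact hb₁'.2 hb₁.1
  · rintro rfl; exact hb₂'.2 hb₁.1
  · rintro rfl; exact hb₁'.2 hb₂.1
  · rintro rfl; exact hb₂'.2 hb₂.1

/-- in a bipartite graph with no unbalanced induced `2P₃`,
any listing of the vertices of a part in non-increasing order of degrees is a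
good ordering; this holds for each of the two parts. -/
theorem degreeOrdering_isGood {A B : Type*} [Fintype A] [Fintype B]
    (adj : A → B → Prop)
    (h₁ : ¬ HasUnbal2P3Centers adj)
    (h₂ : ¬ HasUnbal2P3Centers (fun b a => adj a b))
    (σ : Fin (Fintype.card A) ≃ A)
    (hσ : ∀ i j : Fin (Fintype.card A), i ≤ j →
      {b | adj (σ j) b}.ncard ≤ {b | adj (σ i) b}.ncard)
    (τ : Fin (Fintype.card B) ≃ B)
    (hτ : ∀ i j : Fin (Fintype.card B), i ≤ j →
      {a | adj a (τ j)}.ncard ≤ {a | adj a (τ i)}.ncard) :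
    (∀ i j : Fin (Fintype.card A), i < j →
      ({b | adj (σ j) b} \ {b | adj (σ i) b}).ncard ≤ 1) ∧
    (∀ i j : Fin (Fintype.card B), i < j →
      ({a | adj a (τ j)} \ {a | adj a (τ i)}).ncard ≤ 1) := by
  constructor
  · intro i j hij
    by_contra h
    exact h₁ (key_unbal adj (σ i) (σ j)
      (fun e => hij.ne (σ.injective e)) (hσ i j hij.le) (not_le.mp h))
  · intro i j hij
    by_contra h
    exact h₂ (key_unbal (fun b a => adj a b) (τ i) (τ j)
      (fun e => hij.ne (τ.injective e)) (hτ i j hij.le) (not_le.mp h))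
end

section
/- For every permutation π of {1,...,n}, the quasi-permutation graph G_π is a quasi-chain graph: in each part, the natural ordering of the vertices is good. -/
/-- The quasi-permutation graph `G_π` of a permutation `π` of `{0,…,n-1}` (0-indexed):
parts `A = {a_0,…,a_{2n-1}}` and `B = {b_0,…,b_{2n-1}}`, both modelled by `Fin (2*n)`,
with `a_i` adjacent to `b_j` iff `i ≤ j`, or `i = n + k` and `j = π k` for some `k < n`. -/
def qpAdj (n : ℕ) (π : Equiv.Perm (Fin n)) (i j : Fin (2 * n)) : Prop :=
  (i : ℕ) ≤ (j : ℕ) ∨ ∃ k : Fin n, (i : ℕ) = n + (k : ℕ) ∧ (j : ℕ) = (π k : ℕ)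

/-- `G_π` is a quasi-chain graph: the natural ordering of each part is good,
i.e. `|N(a_j) \ N(a_i)| ≤ 1` for `i < j` and `|N(b_i) \ N(b_j)| ≤ 1` for `i < j`. -/
theorem qp_is_quasiChain (n : ℕ) (π : Equiv.Perm (Fin n)) :
    (∀ i j : Fin (2 * n), i < j →
      ({b | qpAdj n π j b} \ {b | qpAdj n π i b}).ncard ≤ 1) ∧
    (∀ i j : Fin (2 * n), i < j →
      ({a | qpAdj n π a i} \ {a | qpAdj n π a j}).ncard ≤ 1) := by
  constructor
  · intro i j hij
    rw [Set.ncard_le_one]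
    rintro b ⟨hbj, hbi⟩ b' ⟨hb'j, hb'i⟩
    simp only [Set.mem_setOf_eq, qpAdj, not_or, not_exists] at *
    obtain ⟨hbi1, _⟩ := hbi
    obtain ⟨hb'i1, _⟩ := hb'i
    have hij' : (i : ℕ) < (j : ℕ) := hij
    rcases hbj with h | ⟨k, hk1, hk2⟩
    · omega
    rcases hb'j with h | ⟨k', hk'1, hk'2⟩
    · omega
    have : k = k' := by
      ext; omega
    subst this
    ext; omega
  · intro i j hij
    rw [Set.ncard_le_one]
    rintro a ⟨hai, haj⟩ a' ⟨ha'i, ha'j⟩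
    simp only [Set.mem_setOf_eq, qpAdj, not_or, not_exists] at *
    obtain ⟨haj1, _⟩ := haj
    obtain ⟨ha'j1, _⟩ := ha'j
    have hij' : (i : ℕ) < (j : ℕ) := hij
    rcases hai with h | ⟨k, hk1, hk2⟩
    · omega
    rcases ha'i with h | ⟨k', hk'1, hk'2⟩
    · omega
    have : π k = π k' := by ext; omega
    have : k = k' := π.injective this
    subst this
    ext; omega
end

section
/- The map f is order-preserving on patterns: if a permutation π of {1,...,k} is contained as a pattern in a permutation ρ of {1,...,n}, then G_π is isomorphic to a colour-preserving induced subgraph of G_ρ (i.e., there is an induced subgraph embedding of G_π into G_ρ mapping A-vertices to A-vertices and B-vertices to B-vertices). -/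
/-- Pattern containment of permutations: `π ⊆ ρ` iff there is a strictly increasing
index map `e` with `π i < π j ↔ ρ (e i) < ρ (e j)`. -/
def PatternContained {k n : ℕ} (π : Equiv.Perm (Fin k)) (ρ : Equiv.Perm (Fin n)) : Prop :=
  ∃ e : Fin k → Fin n, StrictMono e ∧ ∀ i j : Fin k, π i < π j ↔ ρ (e i) < ρ (e j)

/-- the map `f : π ↦ G_π` is order-preserving: if `π` is contained in `ρ`
as a pattern, then `G_π` embeds into `G_ρ` as a colour-preserving induced subgraph
(`A`-vertices to `A`-vertices, `B`-vertices to `B`-vertices). -/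
theorem qp_pattern_to_embedding {k n : ℕ}
    (π : Equiv.Perm (Fin k)) (ρ : Equiv.Perm (Fin n))
    (h : PatternContained π ρ) :
    ∃ (eA eB : Fin (2 * k) → Fin (2 * n)),
      Function.Injective eA ∧ Function.Injective eB ∧
      ∀ i j : Fin (2 * k), qpAdj k π i j ↔ qpAdj n ρ (eA i) (eB j) := by
  classical
  obtain ⟨e, he, hpat⟩ := h
  set c : Fin k → Fin n := fun j => ρ (e (π.symm j)) with hc
  have hcmono : StrictMono c := by
    intro j j' hlt
    exact (hpat (π.symm j) (π.symm j')).mp (by simpa using hlt)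
  set F : Fin (2 * k) → Fin (2 * n) := fun i =>
    if hik : (i : ℕ) < k then
      ⟨(c ⟨i, hik⟩ : ℕ), by have := (c ⟨i, hik⟩).isLt; omega⟩
    else
      ⟨n + (e ⟨(i : ℕ) - k, by have := i.isLt; omega⟩ : ℕ),
        by have := (e ⟨(i : ℕ) - k, by have := i.isLt; omega⟩).isLt; omega⟩
    with hF
  have hlow : ∀ (i : Fin (2 * k)) (hik : (i : ℕ) < k),
      (F i : ℕ) = (c ⟨i, hik⟩ : ℕ) := by
    intro i hik
    simp only [hF, dif_pos hik]
  have hhigh : ∀ (i : Fin (2 * k)) (hik : ¬ (i : ℕ) < k),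
      (F i : ℕ) = n + (e ⟨(i : ℕ) - k, by have := i.isLt; omega⟩ : ℕ) := by
    intro i hik
    simp only [hF, dif_neg hik]
  have hinj : Function.Injective F := by
    intro a b hab
    have h' : (F a : ℕ) = (F b : ℕ) := congrArg Fin.val hab
    by_cases ha : (a : ℕ) < k <;> by_cases hb : (b : ℕ) < k
    · rw [hlow a ha, hlow b hb] at h'
      have h2 : c ⟨a, ha⟩ = c ⟨b, hb⟩ := Fin.ext h'
      have h3 := hcmono.injective h2
      have h4 : (a : ℕ) = (b : ℕ) := by simpa using congrArg Fin.val h3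
      exact Fin.ext h4
    · rw [hlow a ha, hhigh b hb] at h'
      have := (c ⟨a, ha⟩).isLt; omega
    · rw [hhigh a ha, hlow b hb] at h'
      have := (c ⟨b, hb⟩).isLt; omega
    · rw [hhigh a ha, hhigh b hb] at h'
      have h2 : e ⟨(a : ℕ) - k, by have := a.isLt; omega⟩
          = e ⟨(b : ℕ) - k, by have := b.isLt; omega⟩ := Fin.ext (by omega)
      have h3 := he.injective h2
      have h4 : (a : ℕ) - k = (b : ℕ) - k := congrArg Fin.val h3
      exact Fin.ext (by omega)
  refine ⟨F, F, hinj, hinj, ?_⟩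
  intro i j
  unfold qpAdj
  by_cases hi : (i : ℕ) < k <;> by_cases hj : (j : ℕ) < k
  · -- both low
    rw [hlow i hi, hlow j hj]
    constructor
    · rintro (hle | ⟨t, ht1, _⟩)
      · left
        exact (hcmono.le_iff_le.mpr (show (⟨(i:ℕ), hi⟩ : Fin k) ≤ ⟨(j:ℕ), hj⟩ from hle))
      · omega
    · rintro (hle | ⟨m, hm1, _⟩)
      · left
        exact hcmono.le_iff_le.mp hle
      · have := (c ⟨(i:ℕ), hi⟩).isLt; omega
  · -- i low, j high
    rw [hlow i hi, hhigh j hj]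
    have := (c ⟨(i:ℕ), hi⟩).isLt
    constructor
    · intro _; left; omega
    · intro _; left; have := j.isLt; omega
  · -- i high, j low
    rw [hhigh i hi, hlow j hj]
    have hik' : (i : ℕ) - k < k := by have := i.isLt; omega
    set t0 : Fin k := ⟨(i : ℕ) - k, hik'⟩ with ht0
    constructor
    · rintro (hle | ⟨t, ht1, ht2⟩)
      · omega
      · right
        have ht : t = t0 := Fin.ext (show (t : ℕ) = (i : ℕ) - k by omega)
        refine ⟨e t0, rfl, ?_⟩
        have hjeq : (⟨(j:ℕ), hj⟩ : Fin k) = π t0 := Fin.ext (by rw [← ht]; exact ht2)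
        simp only [hc]
        rw [hjeq, Equiv.symm_apply_apply]
    · rintro (hle | ⟨m, hm1, hm2⟩)
      · have := (c ⟨(j:ℕ), hj⟩).isLt; omega
      · right
        have hm : m = e t0 := Fin.ext (by omega)
        rw [hm] at hm2
        refine ⟨t0, by simp only [ht0]; omega, ?_⟩
        simp only [hc] at hm2
        have h2 : ρ (e (π.symm ⟨(j:ℕ), hj⟩)) = ρ (e t0) := Fin.ext hm2
        have h3 := he.injective (ρ.injective h2)
        have h4 : (⟨(j:ℕ), hj⟩ : Fin k) = π t0 := by
          rw [← h3, Equiv.apply_symm_apply]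
        exact congrArg Fin.val h4
  · -- both high
    rw [hhigh i hi, hhigh j hj]
    have hik' : (i : ℕ) - k < k := by have := i.isLt; omega
    have hjk' : (j : ℕ) - k < k := by have := j.isLt; omega
    have key : (e ⟨(i:ℕ) - k, hik'⟩ ≤ e ⟨(j:ℕ) - k, hjk'⟩) ↔ ((i : ℕ) ≤ (j : ℕ)) := by
      rw [he.le_iff_le]
      simp only [Fin.mk_le_mk]
      omega
    constructor
    · rintro (hle | ⟨t, ht1, ht2⟩)
      · left
        have h2 := key.mpr hle
        rw [Fin.le_def] at h2
        omega
      · have := (π t).isLt; omega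
    · rintro (hle | ⟨m, hm1, hm2⟩)
      · left
        have h2 : e ⟨(i:ℕ) - k, hik'⟩ ≤ e ⟨(j:ℕ) - k, hjk'⟩ := by
          rw [Fin.le_def]; omega
        exact key.mp h2
      · have := (ρ m).isLt; omega
end

section
/- Let π be a permutation of {1,...,n} with π(1) ≠ n and ρ a permutation of {1,...,m} with n ≤ m. If G_π embeds into G_ρ as a colour-preserving induced subgraph, then π is contained in ρ as a pattern. -/
/-- Claim 3: let `π` be a permutation of `{1,…,n}` with `π(1) ≠ n`
(0-indexed: `π 0 ≠ n − 1`) and `ρ` a permutation of `{1,…,m}` with `n ≤ m`.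
If `G_π` embeds into `G_ρ` as a colour-preserving induced subgraph,
then `π` is contained in `ρ` as a pattern. -/
theorem qp_embedding_to_pattern {n m : ℕ} (hn : 0 < n) (hnm : n ≤ m)
    (π : Equiv.Perm (Fin n)) (ρ : Equiv.Perm (Fin m))
    (hπ : (π ⟨0, hn⟩ : ℕ) ≠ n - 1)
    (h : ∃ (eA eB : Fin (2 * n) → Fin (2 * m)),
      Function.Injective eA ∧ Function.Injective eB ∧
      ∀ i j : Fin (2 * n), qpAdj n π i j ↔ qpAdj m ρ (eA i) (eB j)) :
    PatternContained π ρ := by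
  classical
  obtain ⟨f, g, hf, hg, hadj⟩ := h
  obtain ⟨hi, hhi⟩ : ∃ hi : Fin n → Fin (2 * n), ∀ k, (hi k : ℕ) = n + (k : ℕ) :=
    ⟨fun k => ⟨n + (k : ℕ), by have := k.isLt; omega⟩, fun k => rfl⟩
  obtain ⟨lo, hlo⟩ : ∃ lo : Fin n → Fin (2 * n), ∀ j, (lo j : ℕ) = (j : ℕ) :=
    ⟨fun j => ⟨(j : ℕ), by have := j.isLt; omega⟩, fun j => rfl⟩
  have hiffπ : ∀ i j : Fin (2 * n), qpAdj n π i j ↔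
      ((i : ℕ) ≤ (j : ℕ) ∨ ∃ t : Fin n, (i : ℕ) = n + (t : ℕ) ∧ (j : ℕ) = (π t : ℕ)) :=
    fun _ _ => Iff.rfl
  have hiff' : ∀ x y : Fin (2 * m), qpAdj m ρ x y ↔
      ((x : ℕ) ≤ (y : ℕ) ∨ ∃ t : Fin m, (x : ℕ) = m + (t : ℕ) ∧ (y : ℕ) = (ρ t : ℕ)) :=
    fun _ _ => Iff.rfl
  have hA_extra : ∀ k : Fin n, qpAdj n π (hi k) (lo (π k)) :=
    fun k => (hiffπ _ _).2 (Or.inr ⟨k, hhi k, hlo (π k)⟩)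
  have hA_hh : ∀ k : Fin n, qpAdj n π (hi k) (hi k) :=
    fun k => (hiffπ _ _).2 (Or.inl le_rfl)
  have hA_ll : ∀ j : Fin n, qpAdj n π (lo j) (lo j) :=
    fun j => (hiffπ _ _).2 (Or.inl le_rfl)
  have hNA_hl : ∀ (k j : Fin n), j ≠ π k → ¬ qpAdj n π (hi k) (lo j) := by
    intro k j hne hA
    rcases (hiffπ _ _).1 hA with hle | ⟨t, ht1, ht2⟩
    · rw [hhi, hlo] at hle; have := j.isLt; omega
    · rw [hhi] at ht1; rw [hlo] at ht2
      have htk : t = k := Fin.ext (by omega)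
      subst htk
      exact hne (Fin.ext ht2)
  have hNA_hh : ∀ (k k' : Fin n), (k : ℕ) < (k' : ℕ) → ¬ qpAdj n π (hi k') (hi k) := by
    intro k k' hkk hA
    rcases (hiffπ _ _).1 hA with hle | ⟨t, ht1, ht2⟩
    · rw [hhi, hhi] at hle; omega
    · rw [hhi] at ht2; have := (π t).isLt; omega
  have hNA_ll : ∀ (j j' : Fin n), (j : ℕ) < (j' : ℕ) → ¬ qpAdj n π (lo j') (lo j) := by
    intro j j' hjj hA
    rcases (hiffπ _ _).1 hA with hle | ⟨t, ht1, ht2⟩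
    · rw [hlo, hlo] at hle; omega
    · rw [hlo] at ht1; have := j'.isLt; omega
  have hNle : ∀ (i j : Fin (2 * n)), ¬ qpAdj n π i j → ¬ ((f i : ℕ) ≤ (g j : ℕ)) :=
    fun i j hNA hle => hNA ((hadj i j).2 ((hiff' _ _).2 (Or.inl hle)))
  -- Main claim: every extra edge of `G_π` maps to an extra edge of `G_ρ`.
  have key : ∀ k : Fin n, ∃ c : Fin m,
      (f (hi k) : ℕ) = m + (c : ℕ) ∧ (g (lo (π k)) : ℕ) = (ρ c : ℕ) := by
    by_contra hcon
    push_neg at hcon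
    obtain ⟨k₀, hk₀⟩ := hcon
    have hx_le_y : (f (hi k₀) : ℕ) ≤ (g (lo (π k₀)) : ℕ) := by
      rcases (hiff' _ _).1 ((hadj _ _).1 (hA_extra k₀)) with hle | ⟨t, ht1, ht2⟩
      · exact hle
      · exact absurd ht2 (hk₀ t ht1)
    have hex : ∀ k : Fin n, k ≠ k₀ → ∃ c : Fin m,
        (f (hi k) : ℕ) = m + (c : ℕ) ∧ (g (lo (π k)) : ℕ) = (ρ c : ℕ) := by
      intro k hk
      rcases (hiff' _ _).1 ((hadj _ _).1 (hA_extra k)) with hle | ⟨t, ht1, ht2⟩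
      · exfalso
        have h1 := hNle _ _ (hNA_hl k (π k₀) (fun hEq => hk (π.injective hEq).symm))
        have h2 := hNle _ _ (hNA_hl k₀ (π k) (fun hEq => hk (π.injective hEq)))
        omega
      · exact ⟨t, ht1, ht2⟩
    by_cases hval : (π k₀ : ℕ) = n - 1
    · -- Case `π k₀ = n - 1`; then `k₀ ≠ 0` by hypothesis.
      have hk₀0 : k₀ ≠ ⟨0, hn⟩ := by
        intro hEq; apply hπ; rw [← hEq]; exact hval
      obtain ⟨c₀, hc₀f, hc₀g⟩ := hex ⟨0, hn⟩ (Ne.symm hk₀0)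
      have ha := hNle _ _ (hNA_hl ⟨0, hn⟩ (π k₀) (fun hEq => hk₀0 (π.injective hEq)))
      have hk₀pos : 0 < (k₀ : ℕ) := by
        rcases Nat.eq_zero_or_pos (k₀ : ℕ) with h0 | h0
        · exact absurd (Fin.ext h0 : k₀ = ⟨0, hn⟩) hk₀0
        · exact h0
      have hb := hNle _ _ (hNA_hh ⟨0, hn⟩ k₀ hk₀pos)
      rcases (hiff' _ _).1 ((hadj _ _).1 (hA_hh ⟨0, hn⟩)) with hle | ⟨t, ht1, ht2⟩
      · omega
      · have htc : t = c₀ := Fin.ext (by omega)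
        subst htc
        have hge : g (hi ⟨0, hn⟩) = g (lo (π ⟨0, hn⟩)) := Fin.ext (by rw [ht2, hc₀g])
        have hv := congrArg Fin.val (hg hge)
        rw [hhi, hlo] at hv
        have := (π ⟨0, hn⟩).isLt
        omega
    · -- Case `π k₀ ≤ n - 2`.
      have hπlt := (π k₀).isLt
      have hrlt : (π k₀ : ℕ) + 1 < n := by omega
      set jr : Fin n := ⟨(π k₀ : ℕ) + 1, hrlt⟩ with hjr
      have hjrval : (jr : ℕ) = (π k₀ : ℕ) + 1 := rfl
      have hk1 : π.symm jr ≠ k₀ := by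
        intro hEq
        have h1 := congrArg π hEq
        rw [π.apply_symm_apply] at h1
        have hv := congrArg Fin.val h1
        omega
      obtain ⟨ck, hckf, hckg⟩ := hex (π.symm jr) hk1
      rw [π.apply_symm_apply] at hckg
      have ha := hNle _ _ (hNA_ll (π k₀) jr (by omega))
      have hb := hNle _ _ (hNA_hl k₀ jr (fun hEq => by
        have hv := congrArg Fin.val hEq; omega))
      rcases (hiff' _ _).1 ((hadj _ _).1 (hA_ll jr)) with hle | ⟨t, ht1, ht2⟩
      · omega
      · have htc : t = ck := ρ.injective (Fin.ext (by omega))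
        subst htc
        have hfe : f (lo jr) = f (hi (π.symm jr)) := Fin.ext (by omega)
        have hv := congrArg Fin.val (hf hfe)
        rw [hlo, hhi] at hv
        have := jr.isLt
        omega
  choose c hcf hcg using key
  -- `g` is strictly monotone on low columns.
  have gmono : ∀ j j' : Fin n, (j : ℕ) < (j' : ℕ) → (g (lo j) : ℕ) < (g (lo j') : ℕ) := by
    intro j j' hjj
    have h1 := hNle _ _ (hNA_ll j j' hjj)
    rcases (hiff' _ _).1 ((hadj _ _).1 (hA_ll j')) with hle | ⟨t, ht1, ht2⟩
    · omega
    · exfalso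
      have hgj' : (g (lo j') : ℕ) = (ρ (c (π.symm j')) : ℕ) := by
        have h2 := hcg (π.symm j')
        rw [π.apply_symm_apply] at h2
        exact h2
      have htc : t = c (π.symm j') := ρ.injective (Fin.ext (by omega))
      subst htc
      have hfe : f (lo j') = f (hi (π.symm j')) := Fin.ext (by
        have := hcf (π.symm j'); omega)
      have hv := congrArg Fin.val (hf hfe)
      rw [hlo, hhi] at hv
      have := j'.isLt
      omega
  -- `c` is strictly monotone.
  have cmono : ∀ k k' : Fin n, (k : ℕ) < (k' : ℕ) → (c k : ℕ) < (c k' : ℕ) := by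
    intro k k' hkk
    have h2 := hNle _ _ (hNA_hh k k' hkk)
    rcases (hiff' _ _).1 ((hadj _ _).1 (hA_hh k)) with hle | ⟨t, ht1, ht2⟩
    · have := hcf k; have := hcf k'; omega
    · exfalso
      have htc : t = c k := Fin.ext (by have := hcf k; omega)
      subst htc
      have hge : g (hi k) = g (lo (π k)) := Fin.ext (by rw [ht2, hcg k])
      have hv := congrArg Fin.val (hg hge)
      rw [hhi, hlo] at hv
      have := (π k).isLt
      omega
  refine ⟨c, ?_, ?_⟩
  · intro a b hab
    exact Fin.lt_def.mpr (cmono a b (Fin.lt_def.mp hab))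
  · intro i j
    constructor
    · intro hij
      have hg' := gmono (π i) (π j) (Fin.lt_def.mp hij)
      rw [hcg i, hcg j] at hg'
      exact Fin.lt_def.mpr hg'
    · intro hij
      rcases lt_trichotomy (π i) (π j) with hlt | heq | hgt
      · exact hlt
      · exfalso
        have hij' : i = j := π.injective heq
        subst hij'
        exact lt_irrefl _ hij
      · exfalso
        have hg' := gmono (π j) (π i) (Fin.lt_def.mp hgt)
        rw [hcg i, hcg j] at hg'
        have h1 := Fin.lt_def.mp hij
        omega
end

section
/- If G is a bipartite quasi-chain graph, then either G or its bipartite complement has a vertex of degree at most 1. -/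
/-- A quasi-chain graph: a bipartite graph with no unbalanced induced `2P₃`
(centres in either part). -/
def QuasiChain {A B : Type*} (adj : A → B → Prop) : Prop :=
  ¬ HasUnbal2P3Centers adj ∧ ¬ HasUnbal2P3Centers (fun b a => adj a b)

private lemma pair_lt_ncard {α : Type*} [Fintype α] {s : Set α} {x y : α}
    (hx : x ∈ s) (hy : y ∈ s) (hxy : x ≠ y) : 1 < s.ncard :=
  (Set.one_lt_ncard_iff s.toFinite).mpr ⟨x, y, hx, hy, hxy⟩

/-- Claim 4: a (nonempty) quasi-chain graph `G` has a vertex of degree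
at most 1 in `G` or in its bipartite complement. -/
theorem quasiChain_min_degree {A B : Type*} [Fintype A] [Fintype B]
    (adj : A → B → Prop) (h : QuasiChain adj) (hne : Nonempty (A ⊕ B)) :
    (∃ a : A, {b | adj a b}.ncard ≤ 1) ∨ (∃ b : B, {a | adj a b}.ncard ≤ 1) ∨
    (∃ a : A, {b | ¬ adj a b}.ncard ≤ 1) ∨ (∃ b : B, {a | ¬ adj a b}.ncard ≤ 1) := by
  by_contra hcon
  push_neg at hcon
  obtain ⟨h1, h2, h3, h4⟩ := hcon
  -- A and B are nonempty
  have hB : Nonempty B := by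
    obtain a | b := hne.some
    · by_contra hemp
      rw [not_nonempty_iff] at hemp
      exact absurd (h1 a) (not_lt.mpr (Set.ncard_le_one_of_subsingleton _))
    · exact ⟨b⟩
  -- pick b* of maximum degree in B
  obtain ⟨bs, hbs⟩ := Finite.exists_max (fun b : B => {a | adj a b}.ncard)
  -- every b has at most one neighbour outside N(b*)
  have star : ∀ b : B, ({a | adj a b} \ {a | adj a bs}).ncard ≤ 1 := by
    intro b
    by_contra hgt
    push_neg at hgt
    have hrev : ({a | adj a bs} \ {a | adj a b}).ncard ≤ 1 := by
      by_contra hgt2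
      push_neg at hgt2
      obtain ⟨a₁, a₂, ha₁, ha₂, h12⟩ := (Set.one_lt_ncard_iff (Set.toFinite _)).mp hgt
      obtain ⟨a₁', a₂', ha₁', ha₂', h12'⟩ := (Set.one_lt_ncard_iff (Set.toFinite _)).mp hgt2
      simp only [Set.mem_diff, Set.mem_setOf_eq] at ha₁ ha₂ ha₁' ha₂'
      refine h.2 ⟨b, bs, a₁, a₂, a₁', a₂', ?_, h12, ?_, ?_, ?_, ?_, h12',
        ha₁.1, ha₂.1, ha₁'.1, ha₂'.1, ha₁'.2, ha₂'.2, ha₁.2, ha₂.2⟩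
      · rintro rfl; exact ha₁.2 ha₁.1
      · rintro rfl; exact ha₁.2 ha₁'.1
      · rintro rfl; exact ha₁.2 ha₂'.1
      · rintro rfl; exact ha₂.2 ha₁'.1
      · rintro rfl; exact ha₂.2 ha₂'.1
    -- max degree contradiction
    have e1 : ({a | adj a b} \ {a | adj a bs}).ncard + {a | adj a bs}.ncard
        = ({a | adj a b} ∪ {a | adj a bs}).ncard :=
      Set.ncard_diff_add_ncard _ _ (Set.toFinite _) (Set.toFinite _)
    have e2 : ({a | adj a bs} \ {a | adj a b}).ncard + {a | adj a b}.ncard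
        = ({a | adj a bs} ∪ {a | adj a b}).ncard :=
      Set.ncard_diff_add_ncard _ _ (Set.toFinite _) (Set.toFinite _)
    rw [Set.union_comm] at e2
    have hle := hbs b
    omega
  -- two non-neighbours of b*
  obtain ⟨a₁, a₂, ha₁, ha₂, h12⟩ := (Set.one_lt_ncard_iff (Set.toFinite _)).mp (h4 bs)
  simp only [Set.mem_setOf_eq] at ha₁ ha₂
  -- two neighbours of each aᵢ
  obtain ⟨b₁, b₂, hb₁, hb₂, hb12⟩ := (Set.one_lt_ncard_iff (Set.toFinite _)).mp (h1 a₁)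
  obtain ⟨b₁', b₂', hb₁', hb₂', hb12'⟩ := (Set.one_lt_ncard_iff (Set.toFinite _)).mp (h1 a₂)
  simp only [Set.mem_setOf_eq] at hb₁ hb₂ hb₁' hb₂'
  have key : ∀ b : B, adj a₁ b → adj a₂ b → False := by
    intro b hba₁ hba₂
    have : 1 < ({a | adj a b} \ {a | adj a bs}).ncard :=
      pair_lt_ncard ⟨hba₁, ha₁⟩ ⟨hba₂, ha₂⟩ h12
    exact absurd this (not_lt.mpr (star b))
  have n11 : ¬ adj a₂ b₁ := fun hx => key b₁ hb₁ hx
  have n12 : ¬ adj a₂ b₂ := fun hx => key b₂ hb₂ hx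
  have n21 : ¬ adj a₁ b₁' := fun hx => key b₁' hx hb₁'
  have n22 : ¬ adj a₁ b₂' := fun hx => key b₂' hx hb₂'
  refine h.1 ⟨a₁, a₂, b₁, b₂, b₁', b₂', h12, hb12, ?_, ?_, ?_, ?_, hb12',
    hb₁, hb₂, hb₁', hb₂', n21, n22, n11, n12⟩
  · rintro rfl; exact n21 hb₁
  · rintro rfl; exact n22 hb₁
  · rintro rfl; exact n21 hb₂
  · rintro rfl; exact n22 hb₂
end

section
/- In a quasi-chain graph G = (A, B, E), if a is a vertex of A of maximum degree and b, b' are two distinct non-neighbours of a in B, then b and b' have no common neighbour, and at least one of b, b' has degree at most 1. -/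
/-- in a quasi-chain graph, if `a ∈ A` has maximum degree and `b, b'` are two
distinct non-neighbours of `a`, then `b` and `b'` have no common neighbour, and at least
one of `b`, `b'` has degree at most 1. -/
theorem quasiChain_nonneighbours {A B : Type*} [Fintype A] [Fintype B]
    (adj : A → B → Prop) (h : QuasiChain adj) (a : A)
    (hmax : ∀ a' : A, {b | adj a' b}.ncard ≤ {b | adj a b}.ncard)
    (b b' : B) (hbb' : b ≠ b') (hb : ¬ adj a b) (hb' : ¬ adj a b') :
    (∀ a' : A, ¬ (adj a' b ∧ adj a' b')) ∧
    ({a' | adj a' b}.ncard ≤ 1 ∨ {a' | adj a' b'}.ncard ≤ 1) := by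
  have key : ∀ a' : A, ¬ (adj a' b ∧ adj a' b') := by
    rintro a' ⟨h1, h2⟩
    have haa' : a ≠ a' := fun e => hb (e ▸ h1)
    have h2c : 1 < ({x | adj a' x} \ {x | adj a x}).ncard := by
      rw [Set.one_lt_ncard_iff (Set.toFinite _)]
      exact ⟨b, b', ⟨h1, hb⟩, ⟨h2, hb'⟩, hbb'⟩
    have hdiff : 1 < ({x | adj a x} \ {x | adj a' x}).ncard := by
      have e1 := Set.ncard_inter_add_ncard_diff_eq_ncard {x | adj a x} {x | adj a' x}
        (Set.toFinite _)
      have e2 := Set.ncard_inter_add_ncard_diff_eq_ncard {x | adj a' x} {x | adj a x}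
        (Set.toFinite _)
      have h3 := hmax a'
      rw [Set.inter_comm] at e2
      omega
    obtain ⟨b₁, b₂, ⟨hb₁a, hb₁a'⟩, ⟨hb₂a, hb₂a'⟩, hne⟩ :=
      (Set.one_lt_ncard_iff (Set.toFinite _)).mp hdiff
    exact h.1 ⟨a, a', b₁, b₂, b, b', haa', hne,
      fun e => hb (e ▸ hb₁a), fun e => hb' (e ▸ hb₁a),
      fun e => hb (e ▸ hb₂a), fun e => hb' (e ▸ hb₂a), hbb',
      hb₁a, hb₂a, h1, h2, hb, hb', hb₁a', hb₂a'⟩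
  refine ⟨key, ?_⟩
  by_contra hcon
  push_neg at hcon
  obtain ⟨hc1, hc2⟩ := hcon
  obtain ⟨a₁, a₂, h1, h2, hne⟩ :=
    (Set.one_lt_ncard_iff (Set.toFinite _)).mp hc1
  obtain ⟨a₁', a₂', h1', h2', hne'⟩ :=
    (Set.one_lt_ncard_iff (Set.toFinite _)).mp hc2
  have n11 : ¬ adj a₁ b' := fun e => key a₁ ⟨h1, e⟩
  have n21 : ¬ adj a₂ b' := fun e => key a₂ ⟨h2, e⟩
  have n12 : ¬ adj a₁' b := fun e => key a₁' ⟨e, h1'⟩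
  have n22 : ¬ adj a₂' b := fun e => key a₂' ⟨e, h2'⟩
  exact h.2 ⟨b, b', a₁, a₂, a₁', a₂', hbb', hne,
    fun e => n12 (e ▸ h1), fun e => n22 (e ▸ h1),
    fun e => n12 (e ▸ h2), fun e => n22 (e ▸ h2), hne',
    h1, h2, h1', h2', n12, n22, n11, n21⟩
end

section
/- The graphs Q_n (n ≥ 4) form an infinite antichain of quasi-chain graphs under the induced subgraph relation: each Q_n is a quasi-chain graph, and for 4 ≤ m < n, Q_m is not an induced subgraph of Q_n. -/
/-- The simple graph on `A ⊕ B` associated with a bipartite adjacency `adj`. -/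
def biSimple {A B : Type*} (adj : A → B → Prop) : SimpleGraph (A ⊕ B) where
  Adj u v :=
    (∃ a b, u = Sum.inl a ∧ v = Sum.inr b ∧ adj a b) ∨
    (∃ a b, u = Sum.inr b ∧ v = Sum.inl a ∧ adj a b)
  symm := by
    constructor
    rintro u v (⟨a, b, rfl, rfl, hab⟩ | ⟨a, b, rfl, rfl, hab⟩)
    · exact Or.inr ⟨a, b, rfl, rfl, hab⟩
    · exact Or.inl ⟨a, b, rfl, rfl, hab⟩
  loopless := by
    constructor
    rintro u (⟨a, b, h₁, h₂, -⟩ | ⟨a, b, h₁, h₂, -⟩) <;> subst h₁ <;> simp_all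

/-- The graph `Q_n`: part `A` consists of `a_0, …, a_{n-1}` (as `Sum.inl`) and the pendant
vertex `a'_n` (as `Sum.inr`); part `B` consists of `b_0, …, b_{n-1}` and the pendant
vertex `b'_1`.  Edges (0-indexed): `a_i b_j` for `i ≤ j`, `j ≠ i + 1`;
`a_0 b'_1`; and `a'_n b_{n-1}`. -/
def QAdj (n : ℕ) : (Fin n ⊕ Unit) → (Fin n ⊕ Unit) → Prop
  | Sum.inl i, Sum.inl j => i ≤ j ∧ (j : ℕ) ≠ (i : ℕ) + 1
  | Sum.inl i, Sum.inr _ => (i : ℕ) = 0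
  | Sum.inr _, Sum.inl j => (j : ℕ) = n - 1
  | Sum.inr _, Sum.inr _ => False

def NAdj (k i j : ℕ) : Prop :=
  (i < k ∧ j < k ∧ i ≤ j ∧ j ≠ i + 1) ∨ (i = 0 ∧ i < k ∧ j = k) ∨ (i = k ∧ j + 1 = k)

def idx {k : ℕ} : Fin k ⊕ Unit → ℕ := Sum.elim Fin.val (fun _ => k)

@[simp] lemma idx_inl {k : ℕ} (x : Fin k) : idx (Sum.inl x) = (x : ℕ) := rfl
@[simp] lemma idx_inr {k : ℕ} (u : Unit) : idx (Sum.inr u : Fin k ⊕ Unit) = k := rfl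

lemma idx_le {k : ℕ} (x : Fin k ⊕ Unit) : idx x ≤ k := by
  rcases x with x | x
  · exact x.2.le
  · exact le_rfl

lemma idx_inj {k : ℕ} : Function.Injective (idx (k := k)) := by
  rintro (x | x) (y | y) h
  · exact congrArg Sum.inl (Fin.ext h)
  · exact absurd h (Nat.ne_of_lt x.2)
  · exact absurd h.symm (Nat.ne_of_lt y.2)
  · rfl

lemma QAdj_iff {k : ℕ} (x y : Fin k ⊕ Unit) : QAdj k x y ↔ NAdj k (idx x) (idx y) := by
  rcases x with x | x <;> rcases y with y | y
  · have hx := x.2; have hy := y.2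
    simp only [QAdj, NAdj, idx_inl, Fin.le_def, eq_self_iff_true, true_and, and_true,
      lt_self_iff_false, false_and, and_false, or_false, false_or, iff_false, iff_true,
      true_iff, false_iff]
    omega
  · have hx := x.2
    simp only [QAdj, NAdj, idx_inl, idx_inr, eq_self_iff_true, true_and, and_true,
      lt_self_iff_false, false_and, and_false, or_false, false_or, iff_false, iff_true,
      true_iff, false_iff]
    omega
  · have hy := y.2
    simp only [QAdj, NAdj, idx_inl, idx_inr, eq_self_iff_true, true_and, and_true,
      lt_self_iff_false, false_and, and_false, or_false, false_or, iff_false, iff_true,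
      true_iff, false_iff]
    omega
  · simp only [QAdj, NAdj, idx_inr, eq_self_iff_true, true_and, and_true,
      lt_self_iff_false, false_and, and_false, or_false, false_or, iff_false, iff_true,
      true_iff, false_iff]
    omega

lemma nadj_lt {n p y : ℕ} (hp : p < n) :
    NAdj n p y ↔ ((p = 0 ∧ y = n) ∨ (y < n ∧ p ≤ y ∧ y ≠ p + 1)) := by
  unfold NAdj; omega

lemma nadj_top {n y : ℕ} : NAdj n n y ↔ y + 1 = n := by
  unfold NAdj; omega

set_option maxHeartbeats 1000000 in
lemma core (m n : ℕ) (hm : 4 ≤ m) (hmn : m < n) (G H : ℕ → ℕ)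
    (hGle : ∀ i, i ≤ m → G i ≤ n) (hHle : ∀ j, j ≤ m → H j ≤ n)
    (hGinj : ∀ i, i ≤ m → ∀ j, j ≤ m → G i = G j → i = j)
    (hHinj : ∀ i, i ≤ m → ∀ j, j ≤ m → H i = H j → i = j)
    (hadj : ∀ i, i ≤ m → ∀ j, j ≤ m → (NAdj m i j ↔ NAdj n (G i) (H j))) : False := by
  -- a_i is regular for i ≤ m-3
  have step1G : ∀ i, i + 3 ≤ m → G i < n := by
    intro i hi
    by_contra hc
    have hGi : G i = n := le_antisymm (hGle i (by omega)) (by omega)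
    have h1 := (hadj i (by omega) i (by omega)).mp (by unfold NAdj; omega)
    have h2 := (hadj i (by omega) (i + 2) (by omega)).mp (by unfold NAdj; omega)
    rw [hGi, nadj_top] at h1 h2
    have := hHinj i (by omega) (i + 2) (by omega)
    omega
  -- b_{m-1} is regular
  have stepH : H (m - 1) < n := by
    by_contra hc
    have hH : H (m - 1) = n := le_antisymm (hHle _ (by omega)) (by omega)
    have h1 := (hadj 0 (by omega) (m - 1) (by omega)).mp (by unfold NAdj; omega)
    have h2 := (hadj 1 (by omega) (m - 1) (by omega)).mp (by unfold NAdj; omega)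
    rw [hH] at h1 h2
    unfold NAdj at h1 h2
    have := hGinj 0 (by omega) 1 (by omega)
    omega
  -- step lemma
  have step2 : ∀ i, i + 3 ≤ m → G i < n → G (i + 1) < n →
      G (i + 1) = G i + 1 ∧ H (i + 1) = G i + 1 := by
    intro i hi hp hr
    have F1 := (hadj i (by omega) i (by omega)).mp (by unfold NAdj; omega)
    have F2 := (hadj i (by omega) (i + 2) (by omega)).mp (by unfold NAdj; omega)
    have F3 := (hadj (i + 1) (by omega) (i + 1) (by omega)).mp (by unfold NAdj; omega)
    have F4 : ¬ NAdj n (G i) (H (i + 1)) := fun h =>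
      (by unfold NAdj; omega : ¬ NAdj m i (i + 1)) ((hadj i (by omega) (i + 1) (by omega)).mpr h)
    have F5 : ¬ NAdj n (G (i + 1)) (H i) := fun h =>
      (by unfold NAdj; omega : ¬ NAdj m (i + 1) i) ((hadj (i + 1) (by omega) i (by omega)).mpr h)
    have F6 : ¬ NAdj n (G (i + 1)) (H (i + 2)) := fun h =>
      (by unfold NAdj; omega : ¬ NAdj m (i + 1) (i + 2))
        ((hadj (i + 1) (by omega) (i + 2) (by omega)).mpr h)
    have hne : H i ≠ H (i + 2) := fun h => by have := hHinj i (by omega) (i + 2) (by omega); omega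
    have gne : G i ≠ G (i + 1) := fun h => by have := hGinj i (by omega) (i + 1) (by omega); omega
    have b1 := hHle i (by omega); have b2 := hHle (i + 1) (by omega)
    have b3 := hHle (i + 2) (by omega)
    rw [nadj_lt hp] at F1 F2 F4
    rw [nadj_lt hr] at F3 F5 F6
    have hpr : G i < G (i + 1) := by clear F3 F4; omega
    clear F1 F2 F5 F6
    omega
  -- chain
  have chain : ∀ i, i + 3 ≤ m → G i = G 0 + i ∧ (1 ≤ i → H i = G 0 + i) := by
    intro i
    induction i with
    | zero => intro _; exact ⟨rfl, by omega⟩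
    | succ k ih =>
      intro hk
      have hik := ih (by omega)
      have hs := step2 k (by omega) (step1G k (by omega)) (step1G (k + 1) (by omega))
      exact ⟨by omega, fun _ => by omega⟩
  set P := G 0 with hP
  -- G (m-2) regular
  have hGm2 : G (m - 2) < n := by
    by_contra hc
    have hGi : G (m - 2) = n := le_antisymm (hGle _ (by omega)) (by omega)
    have hm2 := (hadj (m - 2) (by omega) (m - 2) (by omega)).mp (by unfold NAdj; omega)
    rw [hGi, nadj_top] at hm2
    have c3 := (chain (m - 3) (by omega)).1
    have c4 := (chain (m - 4) (by omega)).1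
    have r3 := step1G (m - 3) (by omega)
    have r4 := step1G (m - 4) (by omega)
    have F1 := (hadj (m - 4) (by omega) (m - 2) (by omega)).mp (by unfold NAdj; omega)
    have F2 : ¬ NAdj n (G (m - 3)) (H (m - 2)) := fun h =>
      (by unfold NAdj; omega : ¬ NAdj m (m - 3) (m - 2))
        ((hadj (m - 3) (by omega) (m - 2) (by omega)).mpr h)
    have F3 := (hadj (m - 3) (by omega) (m - 1) (by omega)).mp (by unfold NAdj; omega)
    have F4 := (hadj (m - 4) (by omega) (m - 1) (by omega)).mp (by unfold NAdj; omega)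
    rw [nadj_lt r4] at F1 F4
    rw [nadj_lt r3] at F2 F3
    have b1 := hHle (m - 2) (by omega)
    omega
  have hsm2 := step2 (m - 3) (by omega) (step1G (m - 3) (by omega)) (by
    have h32 : m - 3 + 1 = m - 2 := by omega
    rw [h32]; exact hGm2)
  have h32 : m - 3 + 1 = m - 2 := by omega
  rw [h32] at hsm2
  have hc3 := (chain (m - 3) (by omega)).1
  have hGm2v : G (m - 2) = P + (m - 2) := by omega
  have hHm2v : H (m - 2) = P + (m - 2) := by omega
  -- H (m-1) = P + m - 1
  have hHm1v : H (m - 1) = P + (m - 1) := by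
    have r3 := step1G (m - 3) (by omega)
    have r4 := step1G (m - 4) (by omega)
    have c4 := (chain (m - 4) (by omega)).1
    have F3 := (hadj (m - 3) (by omega) (m - 1) (by omega)).mp (by unfold NAdj; omega)
    have F4 := (hadj (m - 4) (by omega) (m - 1) (by omega)).mp (by unfold NAdj; omega)
    have F6 : ¬ NAdj n (G (m - 2)) (H (m - 1)) := fun h =>
      (by unfold NAdj; omega : ¬ NAdj m (m - 2) (m - 1))
        ((hadj (m - 2) (by omega) (m - 1) (by omega)).mpr h)
    rw [nadj_lt r3] at F3
    rw [nadj_lt r4] at F4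
    rw [nadj_lt hGm2] at F6
    omega
  -- bottom: P = 0
  have hP0 : P = 0 := by
    have r0 := step1G 0 (by omega)
    have r1 := step1G 1 (by omega)
    have c1 := (chain 1 (by omega)).1
    have hG2 : G 2 = P + 2 ∧ G 2 < n := by
      rcases Nat.lt_or_ge m 5 with h5 | h5
      · have h24 : (2 : ℕ) = m - 2 := by omega
        rw [h24]; exact ⟨by omega, hGm2⟩
      · exact ⟨(chain 2 (by omega)).1, step1G 2 (by omega)⟩
    have B1 := (hadj 0 (by omega) 0 (by omega)).mp (by unfold NAdj; omega)
    have B2 : ¬ NAdj n (G 1) (H 0) := fun h =>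
      (by unfold NAdj; omega : ¬ NAdj m 1 0) ((hadj 1 (by omega) 0 (by omega)).mpr h)
    have B3 : ¬ NAdj n (G 2) (H 0) := fun h =>
      (by unfold NAdj; omega : ¬ NAdj m 2 0) ((hadj 2 (by omega) 0 (by omega)).mpr h)
    have B4 := (hadj 0 (by omega) m (by omega)).mp (by unfold NAdj; omega)
    have B5 : ¬ NAdj n (G 1) (H m) := fun h =>
      (by unfold NAdj; omega : ¬ NAdj m 1 m) ((hadj 1 (by omega) m (by omega)).mpr h)
    have B6 : ¬ NAdj n (G 2) (H m) := fun h =>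
      (by unfold NAdj; omega : ¬ NAdj m 2 m) ((hadj 2 (by omega) m (by omega)).mpr h)
    have hne : H 0 ≠ H m := fun h => by have := hHinj 0 (by omega) m (by omega); omega
    have b1 := hHle 0 (by omega); have b2 := hHle m (by omega)
    rw [nadj_lt r0] at B1 B4
    rw [nadj_lt r1] at B2 B5
    rw [nadj_lt hG2.2] at B3 B6
    have k0 : P = 0 ∨ H 0 = P := by clear B4 B5 B6; omega
    have km : P = 0 ∨ H m = P := by clear B1 B2 B3; omega
    omega
  -- top: contradiction
  have hHm3 : H (m - 3) = P + (m - 3) := (chain (m - 3) (by omega)).2 (by omega)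
  have b1 := hGle (m - 1) (by omega); have b2 := hGle m (by omega)
  have hne : G (m - 1) ≠ G m := fun h => by have := hGinj (m - 1) (by omega) m (by omega); omega
  have hu : G (m - 1) = m - 1 := by
    have T1 := (hadj (m - 1) (by omega) (m - 1) (by omega)).mp (by unfold NAdj; omega)
    have T3 : ¬ NAdj n (G (m - 1)) (H (m - 2)) := fun h =>
      (by unfold NAdj; omega : ¬ NAdj m (m - 1) (m - 2))
        ((hadj (m - 1) (by omega) (m - 2) (by omega)).mpr h)
    have T5 : ¬ NAdj n (G (m - 1)) (H (m - 3)) := fun h =>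
      (by unfold NAdj; omega : ¬ NAdj m (m - 1) (m - 3))
        ((hadj (m - 1) (by omega) (m - 3) (by omega)).mpr h)
    unfold NAdj at T1 T3 T5
    omega
  have hv : G m = m - 1 := by
    have T2 := (hadj m (by omega) (m - 1) (by omega)).mp (by unfold NAdj; omega)
    have T4 : ¬ NAdj n (G m) (H (m - 2)) := fun h =>
      (by unfold NAdj; omega : ¬ NAdj m m (m - 2)) ((hadj m (by omega) (m - 2) (by omega)).mpr h)
    have T6 : ¬ NAdj n (G m) (H (m - 3)) := fun h =>
      (by unfold NAdj; omega : ¬ NAdj m m (m - 3)) ((hadj m (by omega) (m - 3) (by omega)).mpr h)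
    unfold NAdj at T2 T4 T6
    omega
  omega


theorem quasiQ (n : ℕ) : QuasiChain (QAdj n) := by
  constructor
  · rintro ⟨a, a', b1, b2, b1', b2', h1, h2, h3, h4, h5, h6, h7,
      j1, j2, j3, j4, j5, j6, j7, j8⟩
    rw [QAdj_iff] at j1 j2 j3 j4 j5 j6 j7 j8
    have e1 : idx a ≠ idx a' := fun h => h1 (idx_inj h)
    have e2 : idx b1 ≠ idx b2 := fun h => h2 (idx_inj h)
    have e7 : idx b1' ≠ idx b2' := fun h => h7 (idx_inj h)
    have l1 := idx_le a; have l2 := idx_le a'; have l3 := idx_le b1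
    have l4 := idx_le b2; have l5 := idx_le b1'; have l6 := idx_le b2'
    unfold NAdj at j1 j2 j3 j4 j5 j6 j7 j8
    rcases Nat.lt_trichotomy (idx a) (idx a') with hlt | heq | hgt
    · clear j1 j2 j7 j8 e2; omega
    · exact e1 heq
    · clear j3 j4 j5 j6 e7; omega
  · rintro ⟨a, a', b1, b2, b1', b2', h1, h2, h3, h4, h5, h6, h7,
      j1, j2, j3, j4, j5, j6, j7, j8⟩
    simp only at j1 j2 j3 j4 j5 j6 j7 j8
    rw [QAdj_iff] at j1 j2 j3 j4 j5 j6 j7 j8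
    have e1 : idx a ≠ idx a' := fun h => h1 (idx_inj h)
    have e2 : idx b1 ≠ idx b2 := fun h => h2 (idx_inj h)
    have e7 : idx b1' ≠ idx b2' := fun h => h7 (idx_inj h)
    have l1 := idx_le a; have l2 := idx_le a'; have l3 := idx_le b1
    have l4 := idx_le b2; have l5 := idx_le b1'; have l6 := idx_le b2'
    unfold NAdj at j1 j2 j3 j4 j5 j6 j7 j8
    by_cases hYn : idx a = n
    · clear j3 j4 j5 j6 j7 j8 e7; omega
    by_cases hY'n : idx a' = n
    · clear j1 j2 j5 j6 j7 j8 e2; omega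
    rcases Nat.lt_trichotomy (idx a) (idx a') with hlt | heq | hgt
    · clear j3 j4 j5 j6 e7; omega
    · exact e1 heq
    · clear j1 j2 j7 j8 e2; omega


-- ### glue ###

lemma biAdj_inl_inr {A B : Type*} (adj : A → B → Prop) (x : A) (y : B) :
    (biSimple adj).Adj (Sum.inl x) (Sum.inr y) ↔ adj x y := by
  constructor
  · rintro (⟨a, b, h1, h2, h⟩ | ⟨a, b, h1, h2, h⟩)
    · rw [Sum.inl.injEq] at h1
      rw [Sum.inr.injEq] at h2
      subst h1; subst h2; exact h
    · exact absurd h1 (by simp)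
  · intro h; exact Or.inl ⟨x, y, rfl, rfl, h⟩

lemma biAdj_inr_inl {A B : Type*} (adj : A → B → Prop) (x : A) (y : B) :
    (biSimple adj).Adj (Sum.inr y) (Sum.inl x) ↔ adj x y := by
  constructor
  · rintro (⟨a, b, h1, h2, h⟩ | ⟨a, b, h1, h2, h⟩)
    · exact absurd h1 (by simp)
    · rw [Sum.inr.injEq] at h1
      rw [Sum.inl.injEq] at h2
      subst h1; subst h2; exact h
  · intro h; exact Or.inr ⟨x, y, rfl, rfl, h⟩

lemma biAdj_inl_inl {A B : Type*} (adj : A → B → Prop) (x x' : A) :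
    (biSimple adj).Adj (Sum.inl x) (Sum.inl x') ↔ False := by
  constructor
  · rintro (⟨a, b, h1, h2, h⟩ | ⟨a, b, h1, h2, h⟩)
    · exact absurd h2 (by simp)
    · exact absurd h1 (by simp)
  · exact False.elim

lemma biAdj_inr_inr {A B : Type*} (adj : A → B → Prop) (y y' : B) :
    (biSimple adj).Adj (Sum.inr y) (Sum.inr y') ↔ False := by
  constructor
  · rintro (⟨a, b, h1, h2, h⟩ | ⟨a, b, h1, h2, h⟩)
    · exact absurd h1 (by simp)
    · exact absurd h2 (by simp)
  · exact False.elim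

def swapQ (n : ℕ) : (Fin n ⊕ Unit) ⊕ (Fin n ⊕ Unit) → (Fin n ⊕ Unit) ⊕ (Fin n ⊕ Unit)
  | Sum.inl (Sum.inl i) => Sum.inr (Sum.inl ⟨n - 1 - (i : ℕ), by have := i.2; omega⟩)
  | Sum.inl (Sum.inr _) => Sum.inr (Sum.inr ())
  | Sum.inr (Sum.inl j) => Sum.inl (Sum.inl ⟨n - 1 - (j : ℕ), by have := j.2; omega⟩)
  | Sum.inr (Sum.inr _) => Sum.inl (Sum.inr ())

lemma swapQ_invol (n : ℕ) : ∀ v, swapQ n (swapQ n v) = v := by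
  rintro ((i | u) | (j | u))
  · have := i.2
    simp only [swapQ, Sum.inl.injEq]
    exact Fin.ext (by simp; omega)
  · rfl
  · have := j.2
    simp only [swapQ, Sum.inr.injEq, Sum.inl.injEq]
    exact Fin.ext (by simp; omega)
  · rfl

lemma swapQ_adj (n : ℕ) (u v : (Fin n ⊕ Unit) ⊕ (Fin n ⊕ Unit)) :
    (biSimple (QAdj n)).Adj (swapQ n u) (swapQ n v) ↔ (biSimple (QAdj n)).Adj u v := by
  rcases u with (i | u) | (j | u) <;> rcases v with (i' | u') | (j' | u') <;>
    simp only [swapQ, biAdj_inl_inr, biAdj_inr_inl, biAdj_inl_inl, biAdj_inr_inr] <;>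
    first
      | exact Iff.rfl
      | (rw [QAdj_iff, QAdj_iff]; unfold NAdj;
         simp only [idx_inl, idx_inr, true_and, and_true, false_and, and_false,
           or_true, true_or, or_false, false_or]
         omega)
      | (rw [QAdj_iff, QAdj_iff]; unfold NAdj;
         simp only [idx_inl, idx_inr, true_and, and_true, false_and, and_false,
           or_true, true_or, or_false, false_or])

lemma noEmb (m n : ℕ) (hm : 4 ≤ m) (hmn : m < n)
    (F : (Fin m ⊕ Unit) ⊕ (Fin m ⊕ Unit) → (Fin n ⊕ Unit) ⊕ (Fin n ⊕ Unit))
    (hinj : Function.Injective F)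
    (hiff : ∀ u v, (biSimple (QAdj m)).Adj u v ↔ (biSimple (QAdj n)).Adj (F u) (F v))
    (hA : ∀ x, ∃ x', F (Sum.inl x) = Sum.inl x')
    (hB : ∀ y, ∃ y', F (Sum.inr y) = Sum.inr y') : False := by
  choose g hg using hA
  choose h hh using hB
  have hQ : ∀ x y, QAdj m x y ↔ QAdj n (g x) (h y) := by
    intro x y
    rw [← biAdj_inl_inr (QAdj m), hiff, hg, hh, biAdj_inl_inr]
  have ginj : ∀ x y, g x = g y → x = y := fun x y hxy =>
    Sum.inl_injective (hinj (show F (Sum.inl x) = F (Sum.inl y) by rw [hg, hg, hxy]))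
  have hinj' : ∀ x y, h x = h y → x = y := fun x y hxy =>
    Sum.inr_injective (hinj (show F (Sum.inr x) = F (Sum.inr y) by rw [hh, hh, hxy]))
  set enc : ℕ → Fin m ⊕ Unit := fun i => if hi : i < m then Sum.inl ⟨i, hi⟩ else Sum.inr ()
    with henc
  have hidx : ∀ i, i ≤ m → idx (enc i) = i := by
    intro i hi
    rw [henc]
    dsimp only
    split
    · rfl
    · simp only [idx_inr]; omega
  apply core m n hm hmn (fun i => idx (g (enc i))) (fun j => idx (h (enc j)))
  · intro i _; exact idx_le _
  · intro j _; exact idx_le _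
  · intro i hi j hj hij
    have h1 : enc i = enc j := ginj _ _ (idx_inj hij)
    rw [← hidx i hi, ← hidx j hj, h1]
  · intro i hi j hj hij
    have h1 : enc i = enc j := hinj' _ _ (idx_inj hij)
    rw [← hidx i hi, ← hidx j hj, h1]
  · intro i hi j hj
    have e1 : NAdj m i j ↔ NAdj m (idx (enc i)) (idx (enc j)) := by rw [hidx i hi, hidx j hj]
    rw [e1, ← QAdj_iff, hQ, QAdj_iff]


/-- the graphs `Q_n`, `n ≥ 4`, form an infinite antichain of quasi-chain
graphs: each `Q_n` is a quasi-chain graph, and for `4 ≤ m < n`, `Q_m` is not an induced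
subgraph of `Q_n`. -/
theorem Q_antichain (n : ℕ) (hn : 4 ≤ n) :
    QuasiChain (QAdj n) ∧
    ∀ m, 4 ≤ m → m < n →
      IsEmpty (biSimple (QAdj m) ↪g biSimple (QAdj n)) := by
  refine ⟨quasiQ n, fun m hm hmn => ⟨fun f => ?_⟩⟩
  have hiff : ∀ u v, (biSimple (QAdj m)).Adj u v ↔ (biSimple (QAdj n)).Adj (f u) (f v) :=
    fun u v => f.map_rel_iff.symm
  have hside : ∀ u v, (biSimple (QAdj m)).Adj u v → (f u).isLeft = !(f v).isLeft := by
    intro u v huv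
    rcases (hiff u v).mp huv with ⟨a, b, h1, h2, -⟩ | ⟨a, b, h1, h2, -⟩ <;>
      rw [h1, h2] <;> rfl
  have bswap : ∀ x y : Bool, x = !y → y = !x := by decide
  -- basic edges of Q_m
  have E1 : ∀ (i j : ℕ) (hi : i < m) (hj : j < m), i ≤ j → j ≠ i + 1 →
      (biSimple (QAdj m)).Adj (Sum.inl (Sum.inl ⟨i, hi⟩)) (Sum.inr (Sum.inl ⟨j, hj⟩)) :=
    fun i j hi hj h1 h2 => (biAdj_inl_inr _ _ _).mpr ⟨h1, h2⟩
  have h0m : 0 < m := by omega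
  have h1m : 1 < m := by omega
  have hm1m : m - 1 < m := by omega
  have hm2m : m - 2 < m := by omega
  have E2 : (biSimple (QAdj m)).Adj (Sum.inl (Sum.inl ⟨0, h0m⟩)) (Sum.inr (Sum.inr ())) :=
    (biAdj_inl_inr _ _ _).mpr rfl
  have E3 : (biSimple (QAdj m)).Adj (Sum.inl (Sum.inr ())) (Sum.inr (Sum.inl ⟨m - 1, hm1m⟩)) :=
    (biAdj_inl_inr _ _ _).mpr rfl
  set c := (f (Sum.inl (Sum.inl ⟨0, h0m⟩))).isLeft with hc
  have sM1 : (f (Sum.inr (Sum.inl ⟨m - 1, hm1m⟩))).isLeft = !c :=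
    bswap _ _ (hside _ _ (E1 0 (m - 1) h0m hm1m (by omega) (by omega)))
  have sM2 : (f (Sum.inr (Sum.inl ⟨m - 2, hm2m⟩))).isLeft = !c :=
    bswap _ _ (hside _ _ (E1 0 (m - 2) h0m hm2m (by omega) (by omega)))
  have sA1 : (f (Sum.inl (Sum.inl ⟨1, h1m⟩))).isLeft = c := by
    rw [hside _ _ (E1 1 (m - 1) h1m hm1m (by omega) (by omega)), sM1, Bool.not_not]
  have sA : ∀ x : Fin m ⊕ Unit, (f (Sum.inl x)).isLeft = c := by
    rintro (⟨iv, hi⟩ | u)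
    · by_cases hiv : iv = m - 2
      · subst hiv
        rw [hside _ _ (E1 (m - 2) (m - 2) hi hm2m (by omega) (by omega)), sM2, Bool.not_not]
      · rw [hside _ _ (E1 iv (m - 1) hi hm1m (by omega) (by omega)), sM1, Bool.not_not]
    · cases u
      rw [hside _ _ E3, sM1, Bool.not_not]
  have sB : ∀ y : Fin m ⊕ Unit, (f (Sum.inr y)).isLeft = !c := by
    rintro (⟨jv, hj⟩ | u)
    · by_cases hjv : jv = 1
      · subst hjv
        have := bswap _ _ (hside _ _ (E1 1 1 h1m hj (by omega) (by omega)))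
        rw [this, sA1]
      · exact bswap _ _ (hside _ _ (E1 0 jv h0m hj (by omega) (by omega)))
    · cases u
      exact bswap _ _ (hside _ _ E2)
  have getL : ∀ s : (Fin n ⊕ Unit) ⊕ (Fin n ⊕ Unit), s.isLeft = true → ∃ a, s = Sum.inl a := by
    rintro (a | b) hs
    · exact ⟨a, rfl⟩
    · simp at hs
  have getR : ∀ s : (Fin n ⊕ Unit) ⊕ (Fin n ⊕ Unit), s.isLeft = false → ∃ b, s = Sum.inr b := by
    rintro (a | b) hs
    · simp at hs
    · exact ⟨b, rfl⟩
  cases hcv : c with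
  | true =>
    exact noEmb m n hm hmn f f.injective hiff
      (fun x => getL _ (by rw [sA x, hcv]))
      (fun y => getR _ (by rw [sB y, hcv]; rfl))
  | false =>
    apply noEmb m n hm hmn (fun v => swapQ n (f v))
    · intro x y hxy
      apply f.injective
      have := congrArg (swapQ n) hxy
      rwa [swapQ_invol, swapQ_invol] at this
    · intro u v
      rw [hiff u v, ← swapQ_adj n (f u) (f v)]
    · intro x
      have hx : (f (Sum.inl x)).isLeft = false := by rw [sA x, hcv]
      obtain ⟨b, hb⟩ := getR _ hx
      rw [hb]
      rcases b with b | b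
      · exact ⟨_, rfl⟩
      · exact ⟨_, rfl⟩
    · intro y
      have hy : (f (Sum.inr y)).isLeft = true := by rw [sB y, hcv]; rfl
      obtain ⟨a, ha⟩ := getL _ hy
      rw [ha]
      rcases a with a | a
      · exact ⟨_, rfl⟩
      · exact ⟨_, rfl⟩
end

section
/- In the graph Q_n (n ≥ 4), the ordering a_1, a_2, ..., a_n, a'_n of the A-part is good: for i < j, vertex a_j has at most one neighbour that is not a neighbour of a_i. -/
/-- The ordering `a_1, a_2, …, a_n, a'_n` of the `A`-part of `Q_n`. -/
def ordA (n : ℕ) (i : Fin (n + 1)) : Fin n ⊕ Unit :=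
  if h : (i : ℕ) < n then Sum.inl ⟨i, h⟩ else Sum.inr ()

/-- in `Q_n` (`n ≥ 4`), the ordering `a_1, …, a_n, a'_n` of the `A`-part is
good: for `i < j`, the vertex in position `j` has at most one neighbour that is not a
neighbour of the vertex in position `i`. -/
theorem Q_ordering_good (n : ℕ) (hn : 4 ≤ n) :
    ∀ i j : Fin (n + 1), i < j →
      ({b | QAdj n (ordA n j) b} \ {b | QAdj n (ordA n i) b}).ncard ≤ 1 := by
  intro i j hij
  rw [Set.ncard_le_one_iff]
  intro a b ha hb
  rw [Fin.lt_def] at hij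
  simp only [Set.mem_diff, Set.mem_setOf_eq] at ha hb
  by_cases hi : (i : ℕ) < n <;> by_cases hj : (j : ℕ) < n <;>
    simp only [ordA, hi, hj, dite_true, dite_false] at ha hb <;>
    rcases a with k | u <;> rcases b with l | v <;>
    simp only [QAdj, Fin.le_def, Fin.val_mk, not_and, not_not, ne_eq, false_and,
      Set.mem_setOf_eq] at ha hb <;>
    first
      | rfl
      | (exfalso; omega)
      | (congr 1; apply Fin.ext; omega)
end

section
/- For every n ≥ 1, the double-chain graph D_n is a quasi-chain graph: the ordering of each part inherited from the chain ordering is good. -/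
/-- The index (in the chain graph `Z_{3n}`, 0-indexed) of the vertex `(t, s)` of `D_n`:
the surviving indices are those congruent to `0` or `1` mod `3`. -/
def dIdx {n : ℕ} (p : Fin n × Fin 2) : ℕ := 3 * (p.1 : ℕ) + (p.2 : ℕ)

/-- The double-chain graph `D_n`: obtained from the chain graph `Z_{3n}`
(edges `a_i b_j` for `i ≤ j`, 0-indexed) by deleting the matching `a_i b_{i+1}` and
the vertices with index `≡ 2 (mod 3)` (1-indexed: divisible by 3). -/
def DAdj (n : ℕ) (p q : Fin n × Fin 2) : Prop :=
  dIdx p ≤ dIdx q ∧ dIdx q ≠ dIdx p + 1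

/-- every double-chain graph `D_n` is a quasi-chain graph, and the ordering
of each part inherited from the chain ordering is good. -/
theorem D_is_quasiChain (n : ℕ) (hn : 1 ≤ n) :
    QuasiChain (DAdj n) ∧
    (∀ p q : Fin n × Fin 2, dIdx p < dIdx q →
      ({b | DAdj n q b} \ {b | DAdj n p b}).ncard ≤ 1) ∧
    (∀ p q : Fin n × Fin 2, dIdx p < dIdx q →
      ({a | DAdj n a p} \ {a | DAdj n a q}).ncard ≤ 1) := by
  have inj : ∀ {p q : Fin n × Fin 2}, dIdx p = dIdx q → p = q := by
    rintro ⟨t, s⟩ ⟨t', s'⟩ h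
    have hs := s.isLt; have hs' := s'.isLt
    simp only [dIdx] at h
    have h1 : (t : ℕ) = t' := by omega
    have h2 : (s : ℕ) = s' := by omega
    exact Prod.ext (Fin.ext h1) (Fin.ext h2)
  refine ⟨⟨?_, ?_⟩, ?_, ?_⟩
  · rintro ⟨a, a', b₁, b₂, b₁', b₂', h1, h2, h3, h4, h5, h6, h7,
      k1, k2, k3, k4, k5, k6, k7, k8⟩
    simp only [DAdj, not_and, ne_eq, not_not] at k1 k2 k3 k4 k5 k6 k7 k8
    have n1 : dIdx a ≠ dIdx a' := fun h => h1 (inj h)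
    have n2 : dIdx b₁ ≠ dIdx b₂ := fun h => h2 (inj h)
    have n7 : dIdx b₁' ≠ dIdx b₂' := fun h => h7 (inj h)
    omega
  · rintro ⟨b, b', a₁, a₂, a₁', a₂', h1, h2, h3, h4, h5, h6, h7,
      k1, k2, k3, k4, k5, k6, k7, k8⟩
    simp only [DAdj, not_and, ne_eq, not_not] at k1 k2 k3 k4 k5 k6 k7 k8
    have n1 : dIdx b ≠ dIdx b' := fun h => h1 (inj h)
    have n2 : dIdx a₁ ≠ dIdx a₂ := fun h => h2 (inj h)
    have n7 : dIdx a₁' ≠ dIdx a₂' := fun h => h7 (inj h)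
    omega
  · intro p q hpq
    have hsub : ({b | DAdj n q b} \ {b | DAdj n p b}).Subsingleton := by
      intro x hx y hy
      simp only [Set.mem_diff, Set.mem_setOf_eq, DAdj, not_and, ne_eq, not_not] at hx hy
      exact inj (by omega)
    rcases hsub.eq_empty_or_singleton with h | ⟨x, h⟩ <;> simp [h]
  · intro p q hpq
    have hsub : ({a | DAdj n a p} \ {a | DAdj n a q}).Subsingleton := by
      intro x hx y hy
      simp only [Set.mem_diff, Set.mem_setOf_eq, DAdj, not_and, ne_eq, not_not] at hx hy
      exact inj (by omega)
    rcases hsub.eq_empty_or_singleton with h | ⟨x, h⟩ <;> simp [h]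
end

section
/- Any class of graphs whose lettericity is bounded by a constant k is well-quasi-ordered by the induced subgraph relation. -/
/-- `G` has lettericity at most `k`: there are a decoder `P ⊆ Ω²` over an alphabet `Ω` of
size `k` and a word `w` over `Ω` whose letter graph (positions of `w` as vertices, `i < j`
adjacent iff `(w_i, w_j) ∈ P`) is isomorphic to `G`. -/
def HasLettericityLE {V : Type*} (G : SimpleGraph V) (k : ℕ) : Prop :=
  ∃ (P : Fin k → Fin k → Prop) (w : List (Fin k)) (f : V ≃ Fin w.length),
    ∀ u v : V, G.Adj u v ↔
      ((f u < f v ∧ P (w.get (f u)) (w.get (f v))) ∨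
       (f v < f u ∧ P (w.get (f v)) (w.get (f u))))

/-- any class of graphs of lettericity bounded by a constant `k` is
well-quasi-ordered by the induced subgraph relation: in any infinite sequence of finite
graphs of lettericity at most `k` there are indices `i < j` with the `i`-th graph an
induced subgraph of the `j`-th. -/
theorem bounded_lettericity_wqo (k : ℕ) (sz : ℕ → ℕ)
    (G : ∀ i : ℕ, SimpleGraph (Fin (sz i)))
    (h : ∀ i, HasLettericityLE (G i) k) :
    ∃ i j, i < j ∧ Nonempty (G i ↪g G j) := by
  classical
  choose P w f hspec using h
  -- Find an infinite set of indices with the same decoder.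
  obtain ⟨y, hy⟩ := Finite.exists_infinite_fiber P
  set S : Set ℕ := P ⁻¹' {y} with hS
  haveI : Infinite S := hy
  let e : ℕ ↪o ℕ := Nat.orderEmbeddingOfSet S
  have heS : ∀ n, e n ∈ S := by
    intro n
    have : e n ∈ Set.range e := Set.mem_range_self n
    rwa [Nat.orderEmbeddingOfSet_range] at this
  -- Higman's lemma on the words along this infinite set.
  haveI : IsRefl (Fin k) (· = ·) := ⟨fun _ => rfl⟩
  haveI : IsTrans (Fin k) (· = ·) := ⟨fun _ _ _ => Eq.trans⟩
  have hpwo := Set.PartiallyWellOrderedOn.partiallyWellOrderedOn_sublistForall₂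
    (α := Fin k) (· = ·) (Set.finite_univ.partiallyWellOrderedOn (r := (· = ·)))
  obtain ⟨m, n, hmn, hsub⟩ := hpwo (fun n => ⟨w (e n), fun x _ => Set.mem_univ x⟩)
  change List.SublistForall₂ (· = ·) (w (e m)) (w (e n)) at hsub
  rw [List.sublistForall₂_iff] at hsub
  obtain ⟨l, hl, hsl⟩ := hsub
  rw [List.forall₂_eq_eq_eq] at hl
  subst hl
  obtain ⟨g, hg⟩ := List.sublist_iff_exists_fin_orderEmbedding_get_eq.mp hsl
  have hPm : P (e m) = y := heS m
  have hPn : P (e n) = y := heS n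
  have hP : P (e n) = P (e m) := hPn.trans hPm.symm
  refine ⟨e m, e n, e.strictMono hmn, ⟨⟨⟨fun v => (f (e n)).symm (g (f (e m) v)), ?_⟩, ?_⟩⟩⟩
  · exact (f (e n)).symm.injective.comp (g.injective.comp (f (e m)).injective)
  · intro a b
    rw [hspec (e n), hspec (e m)]
    simp only [Function.Embedding.coeFn_mk, Equiv.apply_symm_apply, ← hg, g.lt_iff_lt, hP]
end

section
/- For any graph G and any vertex x of G, the lettericity of G is at most 2·lett(G − x) + 1, where G − x is the graph obtained by deleting x. -/
/-- The lettericity of a graph: the minimum alphabet size realising it as a letter graph. -/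
noncomputable def lettericity {V : Type*} (G : SimpleGraph V) : ℕ :=
  sInf {k | HasLettericityLE G k}

lemma hasLett_abstract {V A : Type*} {k : ℕ} (G : SimpleGraph V) (e : A ↪ Fin k)
    (P : A → A → Prop) (w : List A) (f : V ≃ Fin w.length)
    (h : ∀ u v, G.Adj u v ↔
      ((f u < f v ∧ P (w.get (f u)) (w.get (f v))) ∨
       (f v < f u ∧ P (w.get (f v)) (w.get (f u))))) :
    HasLettericityLE G k := by
  refine ⟨fun i j => ∃ a b, e a = i ∧ e b = j ∧ P a b, w.map e,
    f.trans (finCongr (w.length_map e).symm), ?_⟩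
  have hget : ∀ i : Fin w.length,
      (w.map e).get (finCongr (w.length_map e).symm i) = e (w.get i) := by
    intro i
    simp [List.get_eq_getElem]
  have hP : ∀ a b : A, ((∃ a' b', e a' = e a ∧ e b' = e b ∧ P a' b') ↔ P a b) := by
    intro a b
    constructor
    · rintro ⟨a', b', ha, hb, hp⟩
      rwa [e.injective ha, e.injective hb] at hp
    · intro hp; exact ⟨a, b, rfl, rfl, hp⟩
  intro u v
  rw [h u v]
  simp only [Equiv.trans_apply, hget, hP]
  have hlt : ∀ i j : Fin w.length,
      ((finCongr (w.length_map e).symm) i < (finCongr (w.length_map e).symm) j ↔ i < j) :=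
    fun i j => Iff.rfl
  simp only [hlt]

lemma hasLett_card {V : Type*} [Fintype V] [DecidableEq V] (G : SimpleGraph V) :
    HasLettericityLE G (Fintype.card V) := by
  set q := Fintype.equivFin V with hq
  refine hasLett_abstract G q.toEmbedding G.Adj (List.ofFn q.symm)
    (q.trans (finCongr (List.length_ofFn (f := q.symm)).symm)) ?_
  set f' : V ≃ Fin (List.ofFn q.symm).length :=
    q.trans (finCongr (List.length_ofFn (f := q.symm)).symm) with hf'
  have hget : ∀ i : Fin (Fintype.card V),
      (List.ofFn q.symm).get (f' (q.symm i)) = q.symm i := by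
    intro i
    simp [hf', List.get_eq_getElem, List.getElem_ofFn]
  intro u v
  have hg : ∀ v : V, (List.ofFn q.symm).get (f' v) = q.symm (q v) := by
    intro v; rw [← hget (q v), Equiv.symm_apply_apply]
  simp only [hg, Equiv.symm_apply_apply]
  constructor
  · intro hadj
    have hne : q u ≠ q v := fun hh => G.ne_of_adj hadj (q.injective hh)
    rcases lt_or_gt_of_ne hne with h1 | h1
    · exact Or.inl ⟨h1, hadj⟩
    · exact Or.inr ⟨h1, hadj.symm⟩
  · rintro (⟨_, h2⟩ | ⟨_, h2⟩)
    · exact h2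
    · exact h2.symm

/-- Fact 2: for any graph `G` and vertex `x`,
`lett(G) ≤ 2 · lett(G − x) + 1`. -/
theorem lettericity_delete_vertex {V : Type*} [Fintype V] [DecidableEq V]
    (G : SimpleGraph V) (x : V) :
    lettericity G ≤ 2 * lettericity (G.induce {y | y ≠ x}) + 1 := by
  classical
  set S := G.induce {y | y ≠ x} with hS
  set k := lettericity S with hk
  have hmem : HasLettericityLE S k :=
    Nat.sInf_mem (s := {n | HasLettericityLE S n}) ⟨_, hasLett_card S⟩
  obtain ⟨P, w, f, hf⟩ := hmem
  apply Nat.sInf_le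
  show HasLettericityLE G (2 * k + 1)
  have hcard : Fintype.card (Option (Fin k × Bool)) = 2 * k + 1 := by
    simp [Fintype.card_option, Fintype.card_prod]
    ring
  set letter : Fin w.length → Option (Fin k × Bool) :=
    fun i => some (w.get i, decide (G.Adj ((f.symm i : {y | y ≠ x}) : V) x)) with hletter
  set w' : List (Option (Fin k × Bool)) := none :: List.ofFn letter with hw'
  have hlen : w.length + 1 = w'.length := by simp [hw']
  set g : V ≃ Fin (w.length + 1) :=
    { toFun := fun v => if h : v = x then 0 else (f ⟨v, h⟩).succ
      invFun := fun i => if h : i = 0 then x else ((f.symm (i.pred h)) : V)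
      left_inv := by
        intro v
        by_cases h : v = x
        · simp [h]
        · simp [h, Fin.succ_ne_zero]
      right_inv := by
        intro i
        by_cases h : i = 0
        · simp [h]
        · have hne : ((f.symm (i.pred h) : {y | y ≠ x}) : V) ≠ x :=
            (f.symm (i.pred h)).property
          simp only [h, dite_false]
          rw [dif_neg hne, Subtype.coe_eta, Equiv.apply_symm_apply, Fin.succ_pred] } with hg
  have hgx : g x = 0 := by simp [hg]
  have hgv : ∀ (v : V) (hv : v ≠ x), g v = (f ⟨v, hv⟩).succ := by
    intro v hv; simp [hg, hv]
  set P' : Option (Fin k × Bool) → Option (Fin k × Bool) → Prop :=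
    fun a b => match a, b with
      | some (a1, _), some (b1, _) => P a1 b1
      | none, some (_, b2) => b2 = true
      | _, _ => False with hP'
  have hget0 : ∀ i : Fin (w.length + 1), (i : ℕ) = 0 → w'.get (finCongr hlen i) = none := by
    intro i hi
    simp [hw', List.get_eq_getElem, hi]
  have hgets : ∀ (j : Fin w.length),
      w'.get (finCongr hlen j.succ) = letter j := by
    intro j
    simp [hw', List.get_eq_getElem, List.getElem_ofFn]
  refine hasLett_abstract G (Fintype.equivFinOfCardEq hcard).toEmbedding P' w'
    (g.trans (finCongr hlen)) ?_
  intro u v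
  simp only [Equiv.trans_apply]
  by_cases hu : u = x <;> by_cases hv : v = x
  · subst hu; subst hv
    simp [hgx]
  · subst hu
    have h1 : g u < g v := by
      rw [hgx, hgv v hv]
      exact Fin.succ_pos _
    have h2 : ¬ (g v < g u) := by rw [hgx]; exact fun h => absurd h (Fin.not_lt_zero _)
    have hgetv : w'.get (finCongr hlen (g v)) = letter (f ⟨v, hv⟩) := by
      rw [hgv v hv]; exact hgets _
    have hlt1 : finCongr hlen (g u) < finCongr hlen (g v) := h1
    rw [hget0 (g u) (by rw [hgx]; rfl), hgetv]
    have : P' none (letter (f ⟨v, hv⟩)) ↔ G.Adj v u := by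
      simp [hP', hletter]
    constructor
    · intro hadj
      exact Or.inl ⟨hlt1, this.mpr hadj.symm⟩
    · rintro (⟨_, hp⟩ | ⟨hlt, _⟩)
      · exact (this.mp hp).symm
      · exact absurd (show g v < g u from hlt) h2
  · subst hv
    have h1 : g v < g u := by
      rw [hgx, hgv u hu]
      exact Fin.succ_pos _
    have h2 : ¬ (g u < g v) := by rw [hgx]; exact fun h => absurd h (Fin.not_lt_zero _)
    have hgetu : w'.get (finCongr hlen (g u)) = letter (f ⟨u, hu⟩) := by
      rw [hgv u hu]; exact hgets _
    have hlt1 : finCongr hlen (g v) < finCongr hlen (g u) := h1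
    rw [hget0 (g v) (by rw [hgx]; rfl), hgetu]
    have : P' none (letter (f ⟨u, hu⟩)) ↔ G.Adj u v := by
      simp [hP', hletter]
    constructor
    · intro hadj
      exact Or.inr ⟨hlt1, this.mpr hadj⟩
    · rintro (⟨hlt, _⟩ | ⟨_, hp⟩)
      · exact absurd (show g u < g v from hlt) h2
      · exact this.mp hp
  · -- both ≠ x
    have hgetu : w'.get (finCongr hlen (g u)) = letter (f ⟨u, hu⟩) := by
      rw [hgv u hu]; exact hgets _
    have hgetv : w'.get (finCongr hlen (g v)) = letter (f ⟨v, hv⟩) := by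
      rw [hgv v hv]; exact hgets _
    rw [hgetu, hgetv]
    have hadj : G.Adj u v ↔ S.Adj ⟨u, hu⟩ ⟨v, hv⟩ := by
      simp [hS]
    have hPuv : P' (letter (f ⟨u, hu⟩)) (letter (f ⟨v, hv⟩)) ↔
        P (w.get (f ⟨u, hu⟩)) (w.get (f ⟨v, hv⟩)) := by
      simp [hP', hletter]
    have hPvu : P' (letter (f ⟨v, hv⟩)) (letter (f ⟨u, hu⟩)) ↔
        P (w.get (f ⟨v, hv⟩)) (w.get (f ⟨u, hu⟩)) := by
      simp [hP', hletter]
    have hltuv : (finCongr hlen (g u) < finCongr hlen (g v)) ↔ f ⟨u, hu⟩ < f ⟨v, hv⟩ := by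
      rw [hgv u hu, hgv v hv]
      exact Fin.succ_lt_succ_iff
    have hltvu : (finCongr hlen (g v) < finCongr hlen (g u)) ↔ f ⟨v, hv⟩ < f ⟨u, hu⟩ := by
      rw [hgv u hu, hgv v hv]
      exact Fin.succ_lt_succ_iff
    rw [hadj, hf, hltuv, hltvu, hPuv, hPvu]
end

section
/- The class of induced matchings (graphs of maximum degree at most 1) has unbounded lettericity: for every k there is an induced matching whose lettericity exceeds k. Equivalently, the graph nP_2 (a perfect matching on 2n vertices) has lettericity at least n. -/
/-- The perfect matching `nP₂` on `2n` vertices. -/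
def matchingGraph (n : ℕ) : SimpleGraph (Fin n × Fin 2) where
  Adj u v := u.1 = v.1 ∧ u.2 ≠ v.2
  symm := by constructor; rintro u v ⟨h₁, h₂⟩; exact ⟨h₁.symm, h₂.symm⟩
  loopless := by constructor; rintro u ⟨-, h⟩; exact h rfl

theorem adj_of_get_eq_of_lt {V : Type*} {G : SimpleGraph V} {k : ℕ} {P : Fin k → Fin k → Prop}
    {w : List (Fin k)} {f : V ≃ Fin w.length}
    (hf : ∀ u v : V, G.Adj u v ↔
      ((f u < f v ∧ P (w.get (f u)) (w.get (f v))) ∨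
       (f v < f u ∧ P (w.get (f v)) (w.get (f u)))))
    {u v x : V} (huv : f u < f v) (hw : w.get (f u) = w.get (f v)) (hvx : f v < f x)
    (hadj : G.Adj v x) : G.Adj u x := by
  have hP : P (w.get (f v)) (w.get (f x)) := by
    rcases (hf v x).1 hadj with ⟨-, hP⟩ | ⟨hxv, -⟩
    · exact hP
    · exact absurd hvx hxv.not_gt
  exact (hf u x).2 (Or.inl ⟨huv.trans hvx, hw ▸ hP⟩)

theorem card_le_of_hasLettericityLE {V ι : Type*} [Fintype ι] {G : SimpleGraph V} {k : ℕ}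
    (c : V → ι) (hc : ∀ u v, G.Adj u v → c u = c v)
    (hedge : ∀ i, ∃ u v, c u = i ∧ c v = i ∧ G.Adj u v)
    (h : HasLettericityLE G k) : Fintype.card ι ≤ k := by
  obtain ⟨P, w, f, hf⟩ := h
  have hordered : ∀ i, ∃ u v, c u = i ∧ c v = i ∧ G.Adj u v ∧ f u < f v := by
    intro i
    obtain ⟨u, v, hu, hv, huv⟩ := hedge i
    rcases lt_or_gt_of_ne (f.injective.ne huv.ne) with hlt | hlt
    · exact ⟨u, v, hu, hv, huv, hlt⟩
    · exact ⟨v, u, hv, hu, huv.symm, hlt⟩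
  choose a b ha hb hadj hlt using hordered
  have same_class : ∀ i j, w.get (f (a i)) = w.get (f (a j)) → f (a i) < f (a j) → i = j :=
    fun i j hw hij => by
      rw [← ha i, ← hb j]
      exact hc _ _ (adj_of_get_eq_of_lt hf hij hw (hlt j) (hadj j))
  have hinj : Function.Injective fun i => w.get (f (a i)) := by
    intro i j hw
    rcases lt_trichotomy (f (a i)) (f (a j)) with hij | hij | hij
    · exact same_class i j hw hij
    · rw [← ha i, ← ha j, f.injective hij]
    · exact (same_class j i hw.symm hij).symm
  simpa using Fintype.card_le_of_injective _ hinj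

theorem le_of_hasLettericityLE_matchingGraph {n k : ℕ}
    (h : HasLettericityLE (matchingGraph n) k) : n ≤ k := by
  simpa using card_le_of_hasLettericityLE (G := matchingGraph n) Prod.fst
    (fun _ _ huv => huv.1) (fun i => ⟨(i, 0), (i, 1), rfl, rfl, rfl, zero_ne_one⟩) h

/-- the class of induced matchings has unbounded lettericity: for every `k`
there is an induced matching whose lettericity exceeds `k`; equivalently, `nP₂` has
lettericity at least `n`. -/
theorem matchings_unbounded_lettericity :
    (∀ k : ℕ, ∃ n : ℕ, ¬ HasLettericityLE (matchingGraph n) k) ∧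
    (∀ n k : ℕ, HasLettericityLE (matchingGraph n) k → n ≤ k) :=
  ⟨fun k => ⟨k + 1, fun h => (le_of_hasLettericityLE_matchingGraph h).not_gt k.lt_succ_self⟩,
    fun _ _ => le_of_hasLettericityLE_matchingGraph⟩
end

section
/- The class D, consisting of all double-chain graphs D_n and their induced subgraphs, is well-quasi-ordered by the induced subgraph relation. -/
/-! A graph of the class is determined by an embedding into some `D_n`, hence by the word whose
`t`-th letter records which of the four vertices of the `t`-th copy of `2P_2` lie in the image.
The adjacency of `D_n` only compares block indices by `<`, so a subword embedding of words
given by an order embedding `Fin m ↪o Fin n` lifts to an embedding `D_m ↪g D_n` carrying the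
first graph into the second. Higman's lemma for words over the finite alphabet of patterns
then gives the result. -/

open Function

theorem exists_lt_orderEmbedding_comp_eq {α : Type*} [Finite α] (n : ℕ → ℕ)
    (w : ∀ i, Fin (n i) → α) :
    ∃ i j, i < j ∧ ∃ φ : Fin (n i) ↪o Fin (n j), w i = w j ∘ φ := by
  have higman := (Set.partiallyWellOrderedOn_of_wellQuasiOrdered
    (Finite.wellQuasiOrdered (α := α) (· = ·)) Set.univ).partiallyWellOrderedOn_sublistForall₂
  obtain ⟨i, j, hij, hsub⟩ := higman.exists_lt (f := fun i => List.ofFn (w i)) fun _ _ _ => trivial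
  rw [List.sublistForall₂_iff, List.forall₂_eq_eq_eq] at hsub
  obtain ⟨_, rfl, hsub⟩ := hsub
  obtain ⟨f, hf⟩ := List.sublist_iff_exists_fin_orderEmbedding_get_eq.mp hsub
  refine ⟨i, j, hij, (Fin.castOrderIso (List.length_ofFn (f := w i)).symm).toOrderEmbedding.trans
    (f.trans (Fin.castOrderIso List.length_ofFn).toOrderEmbedding), funext fun t => ?_⟩
  simpa [Fin.cast] using hf (Fin.cast List.length_ofFn.symm t)

theorem SimpleGraph.nonempty_embedding_of_forall_mem_range {V W V' W' : Type*}
    {G : SimpleGraph V} {H : SimpleGraph W} {G' : SimpleGraph V'} {H' : SimpleGraph W'}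
    (e : G ↪g H) (e' : G' ↪g H') (F : H ↪g H') (h : ∀ v, F (e v) ∈ Set.range e') :
    Nonempty (G ↪g G') := by
  choose f hf using h
  refine ⟨⟨⟨f, fun a b hab => e.injective (F.injective ?_)⟩, fun {a b} => ?_⟩⟩
  · rw [← hf, ← hf, hab]
  · rw [← e'.map_adj_iff, ← e.map_adj_iff, ← F.map_adj_iff]
    exact iff_of_eq (congrArg₂ H'.Adj (hf a) (hf b))

def biSimpleEmbedding {A A' B B' : Type*} {adj : A → B → Prop} {adj' : A' → B' → Prop}
    {f : A → A'} {g : B → B'} (hf : Injective f) (hg : Injective g)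
    (h : ∀ a b, adj' (f a) (g b) ↔ adj a b) : biSimple adj ↪g biSimple adj' where
  toFun := Sum.map f g
  inj' := hf.sumMap hg
  map_rel_iff' := by
    rintro (a | b) (a' | b') <;> simp [biSimple, h]

theorem dAdj_iff {n : ℕ} {p q : Fin n × Fin 2} : DAdj n p q ↔ p.1 < q.1 ∨ p = q := by
  have := p.2.isLt
  have := q.2.isLt
  rw [DAdj, dIdx, dIdx, Prod.ext_iff, Fin.lt_def, Fin.ext_iff, Fin.ext_iff]
  omega

def doubleChainEmbedding {m n : ℕ} (φ : Fin m ↪o Fin n) : biSimple (DAdj m) ↪g biSimple (DAdj n) :=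
  have hinj : Injective (Prod.map φ id) := φ.injective.prodMap injective_id
  biSimpleEmbedding hinj hinj fun p q => by
    rw [dAdj_iff, dAdj_iff, hinj.eq_iff]
    simp

def blockPattern {α β : Type*} (S : Set ((α × β) ⊕ (α × β))) (t : α) : Set (β ⊕ β) :=
  Sum.map (Prod.mk t) (Prod.mk t) ⁻¹' S

theorem map_mem_of_blockPattern_eq {α α' β : Type*} {S : Set ((α × β) ⊕ (α × β))}
    {S' : Set ((α' × β) ⊕ (α' × β))} {φ : α → α'}
    (h : blockPattern S = blockPattern S' ∘ φ) {u : (α × β) ⊕ (α × β)} (hu : u ∈ S) :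
    Sum.map (Prod.map φ id) (Prod.map φ id) u ∈ S' := by
  rcases u with ⟨t, s⟩ | ⟨t, s⟩
  · exact (congrFun h t).subset (show Sum.inl s ∈ blockPattern S t from hu)
  · exact (congrFun h t).subset (show Sum.inr s ∈ blockPattern S t from hu)

/-- the class `𝒟` of all double-chain graphs `D_n` and their induced
subgraphs is well-quasi-ordered by the induced subgraph relation: in any infinite
sequence of graphs from `𝒟` there are `i < j` with the `i`-th graph an induced subgraph
of the `j`-th. -/
theorem D_class_wqo (sz : ℕ → ℕ) (G : ∀ i : ℕ, SimpleGraph (Fin (sz i)))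
    (h : ∀ i, ∃ n, Nonempty (G i ↪g biSimple (DAdj n))) :
    ∃ i j, i < j ∧ Nonempty (G i ↪g G j) := by
  choose n e using h
  obtain ⟨i, j, hij, φ, hφ⟩ :=
    exists_lt_orderEmbedding_comp_eq n fun i => blockPattern (Set.range (e i).some)
  exact ⟨i, j, hij, SimpleGraph.nonempty_embedding_of_forall_mem_range (e i).some (e j).some
    (doubleChainEmbedding φ) fun v => map_mem_of_blockPattern_eq hφ ⟨v, rfl⟩⟩
end
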